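/- arXiv:1612.05160 — 8 statements merged into one kernel-verified Lean document; each statement's English description precedes it below -/
import Mathlib

section
/- Let K be a field, E ⊆ K a finite set of cardinality e, 0 ≤ d < e, and X = {x₁,…,x_{e−d}} a set of e−d variables. Then the collection of polynomials R(X,E') := ∏_{x∈X, y∈E'} (x−y), as E' ranges over the subsets of E of cardinality d, forms a basis of the K-vector space of symmetric polynomials h in x₁,…,x_{e−d} with deg_{x_i}(h) ≤ d for all i. -/
open MvPolynomial Finset

namespace SylvesterAux

variable {K : Type*} [Field K]

/-- A polynomial with partial degrees ≤ d vanishing at all injective tuples from a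
large enough finite set is zero. -/
lemma eq_zero_of_vanish (d : ℕ) : ∀ (n : ℕ) (E : Finset K) (h : MvPolynomial (Fin n) K),
    n + d ≤ E.card → (∀ i, h.degreeOf i ≤ d) →
    (∀ f : Fin n → K, Function.Injective f → (∀ i, f i ∈ E) → eval f h = 0) → h = 0 := by
  intro n
  induction n with
  | zero =>
    intro E h hcard hdeg hvan
    obtain ⟨a, rfl⟩ := MvPolynomial.C_surjective (Fin 0) h
    have := hvan (fun i => i.elim0) (fun i => i.elim0) (fun i => i.elim0)
    simpa using this
  | succ n ih =>
    intro E h hcard hdeg hvan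
    classical
    have key : ∀ i : ℕ, (finSuccEquiv K n h).coeff i = 0 := by
      intro i
      apply ih E _ (by omega) (fun j => (degreeOf_coeff_finSuccEquiv h j i).trans (hdeg j.succ))
      intro g hg hgE
      have himg : (Finset.univ.image g) ⊆ E := by
        intro x hx
        obtain ⟨j, _, rfl⟩ := Finset.mem_image.mp hx
        exact hgE j
      have hmap : (Polynomial.map (eval g) (finSuccEquiv K n h)) = 0 := by
        apply Polynomial.eq_zero_of_natDegree_lt_card_of_eval_eq_zero' _
          (E \ (Finset.univ.image g))
        · intro y hy
          rw [← eval_eq_eval_mv_eval']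
          apply hvan
          · apply Fin.cons_injective_of_injective _ hg
            intro hy'
            obtain ⟨j, rfl⟩ := hy'
            exact (Finset.mem_sdiff.mp hy).2 (Finset.mem_image.mpr ⟨j, Finset.mem_univ j, rfl⟩)
          · intro j
            refine Fin.cases ?_ ?_ j
            · simpa using (Finset.mem_sdiff.mp hy).1
            · intro k; simpa using hgE k
        · have h1 : (Polynomial.map (eval g) (finSuccEquiv K n h)).natDegree ≤ d := by
            refine (Polynomial.natDegree_map_le).trans ?_
            rw [natDegree_finSuccEquiv]
            exact hdeg 0
          have h2 : (E \ (Finset.univ.image g)).card = E.card - n := by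
            rw [Finset.card_sdiff_of_subset himg, Finset.card_image_of_injective _ hg]
            simp
          omega
      have := congrArg (fun p => Polynomial.coeff p i) hmap
      simpa [Polynomial.coeff_map] using this
    have hq : finSuccEquiv K n h = 0 := Polynomial.ext fun i => by rw [key]; simp
    have := (finSuccEquiv K n).injective (by simpa using hq)
    simpa using this

lemma exists_perm_comp {n : ℕ} {f g : Fin n → K} (hf : Function.Injective f)
    (hg : Function.Injective g) (h : Set.range f = Set.range g) :
    ∃ σ : Equiv.Perm (Fin n), f = g ∘ σ := by
  refine ⟨(Equiv.ofInjective f hf).trans ((Equiv.setCongr h).trans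
    (Equiv.ofInjective g hg).symm), ?_⟩
  funext i
  simp [Equiv.apply_ofInjective_symm hg]

lemma eval_eq_of_range_eq {n : ℕ} {h : MvPolynomial (Fin n) K} (hs : h.IsSymmetric)
    {f g : Fin n → K} (hf : Function.Injective f) (hg : Function.Injective g)
    (hr : Set.range f = Set.range g) : eval f h = eval g h := by
  obtain ⟨σ, rfl⟩ := exists_perm_comp hf hg hr
  rw [← eval_rename, hs σ]

end SylvesterAux

open SylvesterAux in
/-- The polynomials R(X,E') = ∏_{i, y∈E'} (xᵢ - y), for E' ranging over
the d-element subsets of E, form a basis of the K-vector space of symmetric polynomials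
in e-d variables with partial degree at most d in each variable. -/
theorem sylvester_interpolation_basis {K : Type*} [Field K] (E : Finset K) (e d : ℕ)
    (he : E.card = e) (hd : d < e)
    (b : {E' // E' ∈ E.powersetCard d} → MvPolynomial (Fin (e - d)) K)
    (hb : ∀ E', b E' = ∏ i : Fin (e - d), ∏ y ∈ E'.1, (MvPolynomial.X i - MvPolynomial.C y)) :
    LinearIndependent K b ∧
      (Submodule.span K (Set.range b) : Set (MvPolynomial (Fin (e - d)) K)) =
        {h | h.IsSymmetric ∧ ∀ i, h.degreeOf i ≤ d} := by
  classical
  subst he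
  have hdn : d + (E.card - d) = E.card := by omega
  -- facts about index subsets
  have hmem : ∀ E' : {E' // E' ∈ E.powersetCard d}, E'.1 ⊆ E ∧ E'.1.card = d :=
    fun E' => Finset.mem_powersetCard.mp E'.2
  have hcardsdiff : ∀ E' : {E' // E' ∈ E.powersetCard d}, (E \ E'.1).card = E.card - d := by
    intro E'
    rw [Finset.card_sdiff_of_subset (hmem E').1, (hmem E').2]
  -- canonical tuples
  let t : {E' // E' ∈ E.powersetCard d} → Fin (E.card - d) → K := fun E' i =>
    ((Finset.equivFinOfCardEq (hcardsdiff E')).symm i : K)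
  have ht_mem : ∀ E' i, t E' i ∈ E \ E'.1 := fun E' i =>
    ((Finset.equivFinOfCardEq (hcardsdiff E')).symm i).2
  have ht_inj : ∀ E', Function.Injective (t E') := by
    intro E' i j hij
    exact (Finset.equivFinOfCardEq (hcardsdiff E')).symm.injective (Subtype.ext hij)
  have ht_range : ∀ E', Set.range (t E') = ↑(E \ E'.1) := by
    intro E'
    ext x
    constructor
    · rintro ⟨i, rfl⟩; exact ht_mem E' i
    · intro hx
      exact ⟨(Finset.equivFinOfCardEq (hcardsdiff E')) ⟨x, hx⟩, by simp [t]⟩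
  -- evaluation of basis elements
  have heval : ∀ (E' : {E' // E' ∈ E.powersetCard d}) (f : Fin (E.card - d) → K),
      eval f (b E') = ∏ i, ∏ y ∈ E'.1, (f i - y) := by
    intro E' f
    rw [hb]
    simp [eval_prod]
  have hzero : ∀ (E' : {E' // E' ∈ E.powersetCard d}) (f : Fin (E.card - d) → K),
      (∃ i, f i ∈ E'.1) → eval f (b E') = 0 := by
    rintro E' f ⟨i, hi⟩
    rw [heval]
    apply Finset.prod_eq_zero (Finset.mem_univ i)
    exact Finset.prod_eq_zero hi (sub_self _)
  have hne : ∀ E', eval (t E') (b E') ≠ 0 := by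
    intro E'
    rw [heval]
    apply Finset.prod_ne_zero_iff.mpr
    intro i _
    apply Finset.prod_ne_zero_iff.mpr
    intro y hy
    have := ht_mem E' i
    rw [Finset.mem_sdiff] at this
    exact sub_ne_zero_of_ne (fun hxy => this.2 (hxy ▸ hy))
  have hcross : ∀ E' E'' : {E' // E' ∈ E.powersetCard d}, E' ≠ E'' →
      eval (t E'') (b E') = 0 := by
    intro E' E'' hne'
    have hnsub : ¬ E'.1 ⊆ E''.1 := by
      intro hsub
      exact hne' (Subtype.ext (Finset.eq_of_subset_of_card_le hsub
        (by rw [(hmem E').2, (hmem E'').2])))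
    obtain ⟨x, hxE', hxE''⟩ := Finset.not_subset.mp hnsub
    have hx : x ∈ E \ E''.1 := Finset.mem_sdiff.mpr ⟨(hmem E').1 hxE', hxE''⟩
    have : x ∈ Set.range (t E'') := by rw [ht_range]; exact hx
    obtain ⟨i, rfl⟩ := this
    exact hzero E' (t E'') ⟨i, hxE'⟩
  -- basis elements lie in the space
  have hbW : ∀ E', (b E').IsSymmetric ∧ ∀ j, (b E').degreeOf j ≤ d := by
    intro E'
    constructor
    · intro σ
      rw [hb]
      simp only [map_prod, map_sub, rename_X, rename_C]
      exact Equiv.prod_comp σ fun i => ∏ y ∈ E'.1, (X i - C y)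
    · intro j
      rw [hb]
      refine (degreeOf_prod_le _ _ _).trans ?_
      have h1 : ∀ i : Fin (E.card - d), degreeOf j (∏ y ∈ E'.1, (X i - C y)) ≤
          if j = i then d else 0 := by
        intro i
        refine (degreeOf_prod_le _ _ _).trans ?_
        have h2 : ∀ y ∈ E'.1, degreeOf j (X i - C y) ≤ if j = i then 1 else 0 := by
          intro y _
          refine (degreeOf_sub_le _ _ _).trans ?_
          simp [degreeOf_X, degreeOf_C]
        refine (Finset.sum_le_sum h2).trans ?_
        rw [Finset.sum_const, (hmem E').2]
        split <;> simp
      refine (Finset.sum_le_sum fun i _ => h1 i).trans ?_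
      simp
  -- the submodule
  let W : Submodule K (MvPolynomial (Fin (E.card - d)) K) :=
    { carrier := {h | h.IsSymmetric ∧ ∀ i, h.degreeOf i ≤ d}
      add_mem' := fun ha hb' => ⟨ha.1.add hb'.1,
        fun i => (degreeOf_add_le i _ _).trans (max_le (ha.2 i) (hb'.2 i))⟩
      zero_mem' := ⟨IsSymmetric.zero, fun i => by simp⟩
      smul_mem' := fun c p hp => ⟨hp.1.smul c, fun i => by
        rw [smul_eq_C_mul]
        exact (degreeOf_mul_le i _ _).trans (by simp [degreeOf_C, hp.2 i])⟩ }
  constructor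
  · -- linear independence
    rw [Fintype.linearIndependent_iff]
    intro c hc E''
    have h0 := congrArg (eval (t E'')) hc
    simp only [map_sum, map_zero, smul_eq_C_mul, map_mul, eval_C] at h0
    rw [Finset.sum_eq_single_of_mem E'' (Finset.mem_univ E'')
      (fun E' _ hne' => by rw [hcross E' E'' hne', mul_zero])] at h0
    exact (mul_eq_zero.mp h0).resolve_right (hne E'')
  · -- spanning
    have hspan : Submodule.span K (Set.range b) = W := by
      apply le_antisymm
      · rw [Submodule.span_le]
        rintro _ ⟨E', rfl⟩
        exact hbW E'
      · intro h hh
        let c : {E' // E' ∈ E.powersetCard d} → K := fun E' =>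
          eval (t E') h / eval (t E') (b E')
        have hg : h - ∑ E', c E' • b E' = 0 := by
          have hgW : (h - ∑ E', c E' • b E') ∈ W :=
            W.sub_mem hh (W.sum_mem fun E' _ => W.smul_mem _ (hbW E'))
          refine eq_zero_of_vanish d (E.card - d) E _ (by omega) hgW.2 ?_
          intro f hf hfE
          -- the image of f
          set S : Finset K := Finset.univ.image f with hS
          have hSsub : S ⊆ E := by
            intro x hx
            obtain ⟨j, _, rfl⟩ := Finset.mem_image.mp hx
            exact hfE j
          have hScard : S.card = E.card - d := by
            rw [hS, Finset.card_image_of_injective _ hf]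
            simp
          have hE'' : E \ S ∈ E.powersetCard d := Finset.mem_powersetCard.mpr
            ⟨Finset.sdiff_subset, by rw [Finset.card_sdiff_of_subset hSsub, hScard]; omega⟩
          set E'' : {E' // E' ∈ E.powersetCard d} := ⟨E \ S, hE''⟩ with hE''def
          have hrange : Set.range f = Set.range (t E'') := by
            rw [ht_range]
            have : E \ E''.1 = S := by
              rw [hE''def]
              exact Finset.sdiff_sdiff_eq_self hSsub
            rw [this, hS]
            ext x
            simp
          rw [eval_eq_of_range_eq hgW.1 hf (ht_inj E'') hrange]
          rw [map_sub, map_sum]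
          simp only [smul_eq_C_mul, map_mul, eval_C]
          rw [Finset.sum_eq_single_of_mem E'' (Finset.mem_univ E'')
            (fun E' _ hne' => by rw [hcross E' E'' hne', mul_zero])]
          rw [div_mul_cancel₀ _ (hne E''), sub_self]
        have : h = ∑ E', c E' • b E' := by
          have := sub_eq_zero.mp hg
          exact this
        rw [this]
        exact Submodule.sum_mem _ fun E' _ =>
          Submodule.smul_mem _ _ (Submodule.subset_span ⟨E', rfl⟩)
    rw [hspan]
    rfl
end

section
/- Let K be a field, E ⊆ K a finite set of cardinality e, 0 ≤ d < e, and X = {x₁,…,x_{e−d}} variables. Then every symmetric polynomial h in X over K with deg_{x_i}(h) ≤ d for all i satisfies the symmetric interpolation formula h(X) = Σ_{E'⊆E, |E'|=d} h(E∖E') · R(X,E') / R(E∖E', E'), where h(E∖E') denotes the evaluation of h at the e−d elements of E∖E'. -/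
open MvPolynomial Finset

/-- A polynomial with partial degrees at most `d` vanishing on all injective tuples
from a set `S` of size at least `n + d` is zero. -/
lemma vanish_of_injective_roots {K : Type*} [Field K] [DecidableEq K] :
    ∀ (n d : ℕ) (S : Finset K), n + d ≤ S.card →
    ∀ f : MvPolynomial (Fin n) K, (∀ i, f.degreeOf i ≤ d) →
    (∀ x : Fin n → K, Function.Injective x → (∀ i, x i ∈ S) → MvPolynomial.eval x f = 0) →
    f = 0 := by
  intro n
  induction n with
  | zero =>
    intro d S hS f _ hval
    have h0 := hval (fun i => i.elim0) (fun i => i.elim0) (fun i => i.elim0)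
    rw [MvPolynomial.eq_C_of_isEmpty f] at h0 ⊢
    rw [MvPolynomial.eval_C] at h0
    rw [h0, map_zero]
  | succ n ih =>
    intro d S hS f hdeg hval
    set q := MvPolynomial.finSuccEquiv K n f with hq_def
    have hq : ∀ j, q.coeff j = 0 := by
      intro j
      apply ih d S (by omega)
      · intro i
        exact (MvPolynomial.degreeOf_coeff_finSuccEquiv f i j).trans (hdeg i.succ)
      · intro t ht htS
        have himg : Finset.image t Finset.univ ⊆ S := by
          intro a ha
          obtain ⟨i, _, rfl⟩ := Finset.mem_image.1 ha
          exact htS i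
        have hp : Polynomial.map (MvPolynomial.eval t) q = 0 := by
          apply Polynomial.eq_zero_of_natDegree_lt_card_of_eval_eq_zero' _
            (S \ Finset.image t Finset.univ)
          · intro a ha
            rw [← MvPolynomial.eval_eq_eval_mv_eval']
            apply hval
            · apply Fin.cons_injective_of_injective _ ht
              intro hmem
              obtain ⟨i, hi⟩ := hmem
              have : a ∈ Finset.image t Finset.univ :=
                Finset.mem_image.2 ⟨i, Finset.mem_univ i, hi⟩
              exact (Finset.mem_sdiff.1 ha).2 this
            · intro i
              refine Fin.cases ?_ ?_ i
              · exact (Finset.mem_sdiff.1 ha).1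
              · intro j
                simpa using htS j
          · have hcardim : (Finset.image t Finset.univ).card = n :=
              by rw [Finset.card_image_of_injective _ ht, Finset.card_univ, Fintype.card_fin]
            have hsd : (S \ Finset.image t Finset.univ).card = S.card - n := by
              rw [Finset.card_sdiff_of_subset himg, hcardim]
            have hnd : q.natDegree ≤ d := by
              rw [hq_def, MvPolynomial.natDegree_finSuccEquiv]
              exact hdeg 0
            have h2 : (Polynomial.map (MvPolynomial.eval t) q).natDegree ≤ q.natDegree :=
              Polynomial.natDegree_map_le
            omega
        have := congrArg (fun p => p.coeff j) hp
        simpa [Polynomial.coeff_map] using this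
    have hq0 : q = 0 := Polynomial.ext fun j => by simp [hq j]
    exact (EmbeddingLike.map_eq_zero_iff (f := MvPolynomial.finSuccEquiv K n)).1 hq0

/-- symmetric interpolation formula
h(X) = Σ_{E'⊆E, |E'|=d} h(E∖E') · R(X,E') / R(E∖E', E'). -/
theorem symmetric_interpolation {K : Type*} [Field K] [DecidableEq K] (E : Finset K) (e d : ℕ)
    (he : E.card = e) (hd : d < e)
    (h : MvPolynomial (Fin (e - d)) K) (hsym : h.IsSymmetric)
    (hdeg : ∀ i, h.degreeOf i ≤ d)
    (v : Finset K → Fin (e - d) → K)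
    (hv : ∀ E' ∈ E.powersetCard d,
      Function.Injective (v E') ∧ Finset.image (v E') Finset.univ = E \ E') :
    h = ∑ E' ∈ E.powersetCard d,
          MvPolynomial.C
            ((MvPolynomial.eval (v E') h) / ∏ a ∈ E \ E', ∏ y ∈ E', (a - y)) *
          ∏ i : Fin (e - d), ∏ y ∈ E', (MvPolynomial.X i - MvPolynomial.C y) := by
  set g : MvPolynomial (Fin (e - d)) K :=
    ∑ E' ∈ E.powersetCard d,
          MvPolynomial.C
            ((MvPolynomial.eval (v E') h) / ∏ a ∈ E \ E', ∏ y ∈ E', (a - y)) *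
          ∏ i : Fin (e - d), ∏ y ∈ E', (MvPolynomial.X i - MvPolynomial.C y) with hg
  -- degree bound for g
  have hdegg : ∀ i, g.degreeOf i ≤ d := by
    intro i
    rw [hg]
    refine (MvPolynomial.degreeOf_sum_le _ _ _).trans (Finset.sup_le ?_)
    intro E' hE'
    have hcard : E'.card = d := (Finset.mem_powersetCard.1 hE').2
    refine (MvPolynomial.degreeOf_mul_le _ _ _).trans ?_
    rw [MvPolynomial.degreeOf_C, zero_add]
    refine (MvPolynomial.degreeOf_prod_le _ _ _).trans ?_
    have hfac : ∀ i' : Fin (e - d),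
        MvPolynomial.degreeOf i (∏ y ∈ E', (MvPolynomial.X i' - MvPolynomial.C y))
          ≤ if i = i' then d else 0 := by
      intro i'
      refine (MvPolynomial.degreeOf_prod_le _ _ _).trans ?_
      have hone : ∀ y ∈ E',
          MvPolynomial.degreeOf i (MvPolynomial.X i' - MvPolynomial.C y)
            ≤ if i = i' then 1 else 0 := by
        intro y _
        refine (MvPolynomial.degreeOf_sub_le _ _ _).trans ?_
        rw [MvPolynomial.degreeOf_X, MvPolynomial.degreeOf_C]
        simp
      refine (Finset.sum_le_sum hone).trans ?_
      rw [Finset.sum_const, hcard]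
      split <;> simp
    refine (Finset.sum_le_sum (fun i' _ => hfac i')).trans ?_
    simp
  -- evaluation agreement on injective tuples from E
  have heval : ∀ x : Fin (e - d) → K, Function.Injective x → (∀ i, x i ∈ E) →
      MvPolynomial.eval x g = MvPolynomial.eval x h := by
    intro x hx hxE
    set S : Finset K := Finset.image x Finset.univ with hS
    have hSsub : S ⊆ E := by
      intro a ha
      obtain ⟨i, _, rfl⟩ := Finset.mem_image.1 ha
      exact hxE i
    have hScard : S.card = e - d := by
      rw [hS, Finset.card_image_of_injective _ hx, Finset.card_univ, Fintype.card_fin]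
    have hESd : (E \ S).card = d := by
      rw [Finset.card_sdiff_of_subset hSsub, hScard, he]; omega
    have hmem : E \ S ∈ E.powersetCard d :=
      Finset.mem_powersetCard.2 ⟨Finset.sdiff_subset, hESd⟩
    rw [hg, map_sum]
    rw [Finset.sum_eq_single_of_mem (E \ S) hmem]
    · -- main term
      have hEdiff : E \ (E \ S) = S := Finset.sdiff_sdiff_eq_self hSsub
      rw [map_mul, MvPolynomial.eval_C, hEdiff]
      have hprod :
          MvPolynomial.eval x (∏ i : Fin (e - d), ∏ y ∈ E \ S, (MvPolynomial.X i - MvPolynomial.C y))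
            = ∏ a ∈ S, ∏ y ∈ E \ S, (a - y) := by
        rw [map_prod, hS, Finset.prod_image (fun i _ j _ hij => hx hij)]
        apply Finset.prod_congr rfl
        intro i _
        rw [map_prod]
        apply Finset.prod_congr rfl
        intro y _
        simp
      rw [hprod]
      have hD : (∏ a ∈ S, ∏ y ∈ E \ S, (a - y)) ≠ 0 := by
        apply Finset.prod_ne_zero_iff.2
        intro a ha
        apply Finset.prod_ne_zero_iff.2
        intro y hy
        have : y ∉ S := (Finset.mem_sdiff.1 hy).2
        intro hzero
        rw [sub_eq_zero] at hzero
        exact this (hzero ▸ ha)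
      rw [div_mul_cancel₀ _ hD]
      -- eval (v (E \ S)) h = eval x h using symmetry
      obtain ⟨hwinj, hwimg⟩ := hv (E \ S) hmem
      rw [hEdiff] at hwimg
      have hchoice : ∀ i : Fin (e - d), ∃ j : Fin (e - d), x j = v (E \ S) i := by
        intro i
        have hmem' : v (E \ S) i ∈ Finset.image (v (E \ S)) Finset.univ :=
          Finset.mem_image.2 ⟨i, Finset.mem_univ i, rfl⟩
        rw [hwimg] at hmem'
        have := hmem'
        obtain ⟨j, _, hj⟩ := Finset.mem_image.1 (hS ▸ this)
        exact ⟨j, hj⟩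
      choose σ hσ using hchoice
      have hσinj : Function.Injective σ := by
        intro i1 i2 h12
        apply hwinj
        rw [← hσ i1, ← hσ i2, h12]
      have hσbij : Function.Bijective σ := (Finite.injective_iff_bijective).1 hσinj
      let π : Equiv.Perm (Fin (e - d)) := Equiv.ofBijective σ hσbij
      have hxw : v (E \ S) = x ∘ π := by
        funext i
        exact (hσ i).symm
      calc MvPolynomial.eval (v (E \ S)) h = MvPolynomial.eval (x ∘ π) h := by rw [hxw]
        _ = MvPolynomial.eval x (MvPolynomial.rename π h) := (MvPolynomial.eval_rename _ _ _).symm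
        _ = MvPolynomial.eval x h := by rw [hsym π]
    · -- other terms vanish
      intro E' hE' hne
      have hcard : E'.card = d := (Finset.mem_powersetCard.1 hE').2
      have hEsub : E' ⊆ E := (Finset.mem_powersetCard.1 hE').1
      have hmeet : ∃ y ∈ E', y ∈ S := by
        by_contra hcon
        push_neg at hcon
        have hsub : E' ⊆ E \ S := fun y hy =>
          Finset.mem_sdiff.2 ⟨hEsub hy, hcon y hy⟩
        exact hne (Finset.eq_of_subset_of_card_le hsub (by omega))
      obtain ⟨y, hyE', hyS⟩ := hmeet
      obtain ⟨i, _, hi⟩ := Finset.mem_image.1 (hS ▸ hyS)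
      rw [map_mul, map_prod]
      apply mul_eq_zero_of_right
      apply Finset.prod_eq_zero (Finset.mem_univ i)
      rw [map_prod]
      apply Finset.prod_eq_zero hyE'
      simp [hi]
  -- conclude using the vanishing lemma
  have hzero : h - g = 0 := by
    apply vanish_of_injective_roots (e - d) d E (by rw [he]; omega)
    · intro i
      refine (MvPolynomial.degreeOf_sub_le _ _ _).trans ?_
      exact max_le (hdeg i) (hdegg i)
    · intro x hx hxE
      rw [map_sub, heval x hx hxE, sub_self]
  have := sub_eq_zero.1 hzero
  exact this
end

section
/- Let d ≥ 0, let A, B ⊆ K be finite sets with |A| ≥ d and |B| ≥ d, and let X be a set of variables with |X| ≤ |A| + |B| − 2d. Then Σ_{A₁⊔A₂=A, |A₁|=d} R(A₂,B)·R(X,A₁)/R(A₁,A₂) = (−1)^{d(|A|−d)} Σ_{B₁⊔B₂=B, |B₁|=d} R(A,B₂)·R(X,B₁)/R(B₁,B₂). -/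
open Polynomial Finset

set_option linter.unusedSectionVars false
set_option linter.unusedVariables false
set_option maxHeartbeats 1000000


open Polynomial Finset

lemma coeff_basis_top {F : Type*} [Field F] [DecidableEq F] (C : Finset F) (c : F) (hc : c ∈ C) :
    (Lagrange.basis C id c).coeff (C.card - 1) = (∏ c' ∈ C.erase c, (c - c'))⁻¹ := by
  rw [Lagrange.basis]
  have h1 : ∀ c' ∈ C.erase c, Lagrange.basisDivisor (id c) (id c')
      = Polynomial.C ((c - c')⁻¹) * (X - Polynomial.C c') := fun c' _ => rfl
  rw [prod_congr rfl h1, prod_mul_distrib, ← map_prod]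
  have hm : (∏ c' ∈ C.erase c, (X - Polynomial.C c')).Monic :=
    monic_prod_of_monic _ _ fun i _ => monic_X_sub_C i
  have hd : (∏ c' ∈ C.erase c, (X - Polynomial.C c')).natDegree = C.card - 1 := by
    rw [natDegree_prod_of_monic _ _ fun i _ => monic_X_sub_C i]
    simp [card_erase_of_mem hc]
  rw [coeff_C_mul, ← hd, hm.coeff_natDegree, mul_one, ← prod_inv_distrib]

lemma key_vanish {F : Type*} [Field F] [DecidableEq F] (C : Finset F) (g : F[X])
    (hg : g.degree < ((C.card - 1 : ℕ) : WithBot ℕ)) :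
    ∑ c ∈ C, g.eval c / ∏ c' ∈ C.erase c, (c - c') = 0 := by
  have hvs : Set.InjOn (id : F → F) C := Function.injective_id.injOn
  have hlt : g.degree < (C.card : WithBot ℕ) :=
    lt_of_lt_of_le hg (by exact_mod_cast Nat.sub_le C.card 1)
  have hint := Lagrange.eq_interpolate (f := g) hvs (by rw [Nat.cast_withBot] at *; exact hlt)
  have h0 : g.coeff (C.card - 1) = 0 := coeff_eq_zero_of_degree_lt hg
  have hcc := congrArg (fun p => Polynomial.coeff p (C.card - 1)) hint
  simp only [Lagrange.interpolate_apply, finset_sum_coeff, coeff_C_mul, id] at hcc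
  rw [h0] at hcc
  rw [eq_comm]
  rw [hcc]
  refine Finset.sum_congr rfl fun c hc => ?_
  rw [coeff_basis_top C c hc, div_eq_mul_inv]

open Polynomial Finset

lemma prod_sub_ne_zero {F : Type*} [Field F] [DecidableEq F] {s t : Finset F}
    (h : Disjoint s t) (c : F) (hc : c ∈ s) : (∏ c' ∈ t, (c - c')) ≠ 0 := by
  refine prod_ne_zero_iff.mpr fun c' hc' => sub_ne_zero_of_ne ?_
  rintro rfl
  exact (h.forall_ne_finset hc hc') rfl

lemma prod_neg' {F : Type*} [CommRing F] (s : Finset F) (f : F → F) :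
    ∏ c ∈ s, -(f c) = (-1 : F) ^ s.card * ∏ c ∈ s, f c := by
  rw [← prod_const (-1 : F), ← prod_mul_distrib]
  simp

lemma exchange_one {F : Type*} [Field F] [DecidableEq F] (A B : Finset F) (hAB : Disjoint A B)
    (hA : A.Nonempty) (g : F[X])
    (hg : g.degree < ((A.card + B.card - 1 : ℕ) : WithBot ℕ)) :
    ∑ a ∈ A, (∏ a' ∈ A.erase a, ∏ b ∈ B, (a' - b)) * g.eval a / ∏ a' ∈ A.erase a, (a - a')
      = (-1 : F) ^ (A.card - 1) *
        ∑ b ∈ B, (∏ a ∈ A, ∏ b' ∈ B.erase b, (a - b')) * g.eval b /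
          ∏ b' ∈ B.erase b, (b - b') := by
  classical
  have hC : (A ∪ B).card = A.card + B.card := card_union_of_disjoint hAB
  have hkv := key_vanish (A ∪ B) g (by rw [hC]; exact hg)
  rw [sum_union hAB] at hkv
  have hApart : ∀ a ∈ A, g.eval a / ∏ c' ∈ (A ∪ B).erase a, (a - c')
      = g.eval a / ((∏ a' ∈ A.erase a, (a - a')) * ∏ b ∈ B, (a - b)) := by
    intro a ha
    have h1 : (A ∪ B).erase a = A.erase a ∪ B := by
      rw [erase_union_distrib, erase_eq_of_notMem (disjoint_left.mp hAB ha)]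
    rw [h1, prod_union (disjoint_of_subset_left (erase_subset _ _) hAB)]
  have hBpart : ∀ b ∈ B, g.eval b / ∏ c' ∈ (A ∪ B).erase b, (b - c')
      = g.eval b / ((∏ a ∈ A, (b - a)) * ∏ b' ∈ B.erase b, (b - b')) := by
    intro b hb
    have h1 : (A ∪ B).erase b = A ∪ B.erase b := by
      rw [erase_union_distrib, erase_eq_of_notMem (disjoint_right.mp hAB hb)]
    rw [h1, prod_union (disjoint_of_subset_right (erase_subset _ _) hAB)]
  rw [Finset.sum_congr rfl hApart, Finset.sum_congr rfl hBpart] at hkv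
  set R : F := ∏ a ∈ A, ∏ b ∈ B, (a - b) with hR
  have hmul := congrArg (fun z => R * z) hkv
  simp only [mul_add, mul_zero, Finset.mul_sum] at hmul
  have hA2 : ∀ a ∈ A, R * (g.eval a / ((∏ a' ∈ A.erase a, (a - a')) * ∏ b ∈ B, (a - b)))
      = (∏ a' ∈ A.erase a, ∏ b ∈ B, (a' - b)) * g.eval a / ∏ a' ∈ A.erase a, (a - a') := by
    intro a ha
    have hP2 : (∏ b ∈ B, (a - b)) ≠ 0 := prod_sub_ne_zero hAB a ha
    have hP1 : (∏ a' ∈ A.erase a, (a - a')) ≠ 0 := by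
      refine prod_sub_ne_zero (t := A.erase a) ?_ a (mem_singleton_self a)
      simp [disjoint_left]
    have hRsplit : R = (∏ b ∈ B, (a - b)) * ∏ a' ∈ A.erase a, ∏ b ∈ B, (a' - b) :=
      (mul_prod_erase A _ ha).symm
    rw [hRsplit]
    field_simp
  have hB2 : ∀ b ∈ B, R * (g.eval b / ((∏ a ∈ A, (b - a)) * ∏ b' ∈ B.erase b, (b - b')))
      = (-1 : F) ^ A.card *
        ((∏ a ∈ A, ∏ b' ∈ B.erase b, (a - b')) * g.eval b / ∏ b' ∈ B.erase b, (b - b')) := by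
    intro b hb
    have hQ1 : (∏ a ∈ A, (b - a)) ≠ 0 := prod_sub_ne_zero hAB.symm b hb
    have hQ2 : (∏ b' ∈ B.erase b, (b - b')) ≠ 0 := by
      refine prod_sub_ne_zero (t := B.erase b) ?_ b (mem_singleton_self b)
      simp [disjoint_left]
    have hRsplit : R = (∏ a ∈ A, ∏ b' ∈ B.erase b, (a - b')) *
        ((-1 : F) ^ A.card * ∏ a ∈ A, (b - a)) := by
      have h1 : ∀ a ∈ A, ∏ b' ∈ B, (a - b') = (a - b) * ∏ b' ∈ B.erase b, (a - b') :=
        fun a _ => (mul_prod_erase B _ hb).symm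
      rw [hR, Finset.prod_congr rfl h1, prod_mul_distrib]
      have h2 : ∏ a ∈ A, (a - b) = (-1 : F) ^ A.card * ∏ a ∈ A, (b - a) := by
        rw [← prod_neg']
        exact Finset.prod_congr rfl fun a _ => by ring
      rw [h2]; ring
    rw [hRsplit]
    field_simp
  rw [Finset.sum_congr rfl hA2, Finset.sum_congr rfl hB2] at hmul
  rw [← Finset.mul_sum] at hmul
  have hsign : (-1 : F) ^ (A.card - 1) = -(-1 : F) ^ A.card := by
    obtain ⟨m, hm⟩ := Nat.exists_eq_add_of_le hA.card_pos
    rw [hm]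
    simp [pow_succ, pow_add]
  rw [hsign]
  linear_combination hmul

open Finset

lemma reindex_insert {β M : Type*} [DecidableEq β] [AddCommMonoid M] (s : Finset β) (j : ℕ)
    (f : Finset β → M) :
    ∑ S ∈ s.powersetCard (j + 1), (j + 1) • f S
      = ∑ S' ∈ s.powersetCard j, ∑ a ∈ s \ S', f (insert a S') := by
  have h1 : ∀ S ∈ s.powersetCard (j + 1), (j + 1) • f S = ∑ a ∈ S, f S := by
    intro S hS
    rw [sum_const, (mem_powersetCard.mp hS).2]
  rw [Finset.sum_congr rfl h1, Finset.sum_sigma', Finset.sum_sigma']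
  refine Finset.sum_nbij' (fun p => ⟨p.1.erase p.2, p.2⟩) (fun p => ⟨insert p.2 p.1, p.2⟩)
    ?_ ?_ ?_ ?_ ?_
  · rintro ⟨S, a⟩ hp
    simp only [mem_sigma, mem_powersetCard] at *
    obtain ⟨⟨hsub, hcard⟩, ha⟩ := hp
    refine ⟨⟨(erase_subset _ _).trans hsub, ?_⟩, ?_⟩
    · rw [card_erase_of_mem ha, hcard]; rfl
    · simp [mem_sdiff, hsub ha]
  · rintro ⟨S, a⟩ hp
    simp only [mem_sigma, mem_powersetCard, mem_sdiff] at *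
    obtain ⟨⟨hsub, hcard⟩, ha, hna⟩ := hp
    refine ⟨⟨insert_subset ha hsub, ?_⟩, mem_insert_self _ _⟩
    rw [card_insert_of_notMem (fun h => hna h), hcard]
  · rintro ⟨S, a⟩ hp
    simp only [mem_sigma, mem_powersetCard] at hp
    simp [insert_erase hp.2]
  · rintro ⟨S, a⟩ hp
    simp only [mem_sigma, mem_powersetCard, mem_sdiff] at hp
    simp [erase_insert hp.2.2]
  · rintro ⟨S, a⟩ hp
    simp only [mem_sigma, mem_powersetCard] at hp
    simp [insert_erase hp.2]

open Polynomial Finset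


noncomputable section

variable {F : Type*} [Field F] [DecidableEq F]

def Rp (P Q : Finset F) : F := ∏ p ∈ P, ∏ q ∈ Q, (p - q)

lemma Rp_ne_zero {P Q : Finset F} (h : Disjoint P Q) : (Rp P Q) ≠ 0 := by
  refine prod_ne_zero_iff.mpr fun p hp => prod_ne_zero_iff.mpr fun q hq => sub_ne_zero_of_ne ?_
  rintro rfl
  exact (h.forall_ne_finset hp hq) rfl

def Tm (g : F[X]) (A B A₁ B₁ : Finset F) : F :=
  Rp (A \ A₁) (B \ B₁) * (∏ a ∈ A₁, g.eval a) * ((∏ b ∈ B₁, g.eval b) * Rp B₁ A₁) /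
    (Rp A₁ (A \ A₁) * Rp B₁ (B \ B₁))

lemma step_core (g : F[X]) (A B A₁' B₁ : Finset F) (hAB : Disjoint A B)
    (hA₁' : A₁' ⊆ A) (hB₁ : B₁ ⊆ B) (hne : (A \ A₁').Nonempty)
    (hdegG : (g * (∏ a'' ∈ A₁', (C a'' - X)) * (∏ b'' ∈ B₁, (C b'' - X))).degree
      < (((A \ A₁').card + (B \ B₁).card - 1 : ℕ) : WithBot ℕ)) :
    ∑ a ∈ A \ A₁', Tm g A B (insert a A₁') B₁
      = (-1 : F) ^ ((A \ A₁').card - 1) * (-1 : F) ^ A₁'.card *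
        ∑ b ∈ B \ B₁, Tm g A B A₁' (insert b B₁) := by
  set G : F[X] := g * (∏ a'' ∈ A₁', (C a'' - X)) * (∏ b'' ∈ B₁, (C b'' - X)) with hG
  set At : Finset F := A \ A₁' with hAt
  set Bt : Finset F := B \ B₁ with hBt
  have hdisj : Disjoint At Bt := (hAB.mono (sdiff_subset) (sdiff_subset))
  have hdisjA : Disjoint A₁' At := disjoint_sdiff
  have hdisjB : Disjoint B₁ Bt := disjoint_sdiff
  have hConstden : Rp A₁' At * Rp B₁ Bt ≠ 0 := mul_ne_zero (Rp_ne_zero hdisjA) (Rp_ne_zero hdisjB)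
  set Const : F := (∏ a ∈ A₁', g.eval a) * (∏ b ∈ B₁, g.eval b) * Rp B₁ A₁' /
    (Rp A₁' At * Rp B₁ Bt) with hConst
  -- A side terms
  have haT : ∀ a ∈ At, Tm g A B (insert a A₁') B₁
      = Const * ((∏ a' ∈ At.erase a, ∏ b ∈ Bt, (a' - b)) * G.eval a /
          ∏ a' ∈ At.erase a, (a - a')) := by
    intro a ha
    have haA : a ∈ A := (mem_sdiff.mp ha).1
    have haA₁' : a ∉ A₁' := (mem_sdiff.mp ha).2
    have e1 : A \ insert a A₁' = At.erase a := Finset.sdiff_insert A A₁' a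
    have e2 : ∏ p ∈ insert a A₁', g.eval p = g.eval a * ∏ p ∈ A₁', g.eval p :=
      prod_insert haA₁'
    have e3 : Rp B₁ (insert a A₁') = (∏ b'' ∈ B₁, (b'' - a)) * Rp B₁ A₁' := by
      rw [Rp, Rp, ← prod_mul_distrib]
      exact Finset.prod_congr rfl fun b'' _ => prod_insert haA₁'
    have e4 : Rp (insert a A₁') (At.erase a)
        = (∏ a' ∈ At.erase a, (a - a')) * Rp A₁' (At.erase a) := by
      rw [Rp, prod_insert haA₁', Rp]
    have e5 : Rp A₁' At = (∏ a'' ∈ A₁', (a'' - a)) * Rp A₁' (At.erase a) := by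
      rw [Rp, Rp, ← prod_mul_distrib]
      exact Finset.prod_congr rfl fun p _ => (mul_prod_erase At _ ha).symm
    have e6 : G.eval a = g.eval a * ((∏ a'' ∈ A₁', (a'' - a)) * ∏ b'' ∈ B₁, (b'' - a)) := by
      simp [hG, eval_prod, mul_assoc]
    have hpa : (∏ a' ∈ At.erase a, (a - a')) ≠ 0 := by
      have : Rp {a} (At.erase a) ≠ 0 := Rp_ne_zero (by simp)
      simpa [Rp] using this
    have hca : (∏ a'' ∈ A₁', (a'' - a)) ≠ 0 := by
      have : Rp A₁' {a} ≠ 0 := Rp_ne_zero (by simp [haA₁'])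
      simpa [Rp] using this
    have hRA'rest : Rp A₁' (At.erase a) ≠ 0 :=
      Rp_ne_zero (hdisjA.mono_right (erase_subset _ _))
    have hRBB : Rp B₁ Bt ≠ 0 := Rp_ne_zero hdisjB
    rw [Tm, e1, e2, e3, e4, hConst, e6, e5]
    have hcv : (∏ a' ∈ At.erase a, ∏ b ∈ Bt, (a' - b)) = Rp (At.erase a) Bt := rfl
    have hcv2 : Rp (At.erase a) (B \ B₁) = Rp (At.erase a) Bt := rfl
    rw [hcv, hcv2]
    field_simp
    exact mul_div_cancel_right₀ _ hRBB
  -- B side terms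
  have hbT : ∀ b ∈ Bt, Tm g A B A₁' (insert b B₁)
      = (-1 : F) ^ A₁'.card * Const * ((∏ a ∈ At, ∏ b' ∈ Bt.erase b, (a - b')) * G.eval b /
          ∏ b' ∈ Bt.erase b, (b - b')) := by
    intro b hb
    have hbB : b ∈ B := (mem_sdiff.mp hb).1
    have hbB₁ : b ∉ B₁ := (mem_sdiff.mp hb).2
    have f1 : B \ insert b B₁ = Bt.erase b := Finset.sdiff_insert B B₁ b
    have f2 : ∏ p ∈ insert b B₁, g.eval p = g.eval b * ∏ p ∈ B₁, g.eval p :=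
      prod_insert hbB₁
    have f3 : Rp (insert b B₁) A₁' = (∏ a'' ∈ A₁', (b - a'')) * Rp B₁ A₁' := by
      rw [Rp, prod_insert hbB₁, Rp]
    have f4 : Rp (insert b B₁) (Bt.erase b)
        = (∏ b' ∈ Bt.erase b, (b - b')) * Rp B₁ (Bt.erase b) := by
      rw [Rp, prod_insert hbB₁, Rp]
    have f5 : Rp B₁ Bt = (∏ b'' ∈ B₁, (b'' - b)) * Rp B₁ (Bt.erase b) := by
      rw [Rp, Rp, ← prod_mul_distrib]
      exact Finset.prod_congr rfl fun p _ => (mul_prod_erase Bt _ hb).symm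
    have f6 : G.eval b = g.eval b * ((∏ a'' ∈ A₁', (a'' - b)) * ∏ b'' ∈ B₁, (b'' - b)) := by
      simp [hG, eval_prod, mul_assoc]
    have f7 : (∏ a'' ∈ A₁', (b - a'')) = (-1 : F) ^ A₁'.card * ∏ a'' ∈ A₁', (a'' - b) := by
      rw [← prod_neg']
      exact Finset.prod_congr rfl fun p _ => by ring
    have hpb : (∏ b' ∈ Bt.erase b, (b - b')) ≠ 0 := by
      have : Rp {b} (Bt.erase b) ≠ 0 := Rp_ne_zero (by simp)
      simpa [Rp] using this
    have hcb : (∏ b'' ∈ B₁, (b'' - b)) ≠ 0 := by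
      have : Rp B₁ {b} ≠ 0 := Rp_ne_zero (by simp [hbB₁])
      simpa [Rp] using this
    have hRB'rest : Rp B₁ (Bt.erase b) ≠ 0 :=
      Rp_ne_zero (hdisjB.mono_right (erase_subset _ _))
    have hRA : Rp A₁' At ≠ 0 := Rp_ne_zero hdisjA
    rw [Tm, f1, f2, f3, f4, f7, hConst, f6, f5]
    have hcv : (∏ a ∈ At, ∏ b' ∈ Bt.erase b, (a - b')) = Rp At (Bt.erase b) := rfl
    have hcv2 : Rp (A \ A₁') (Bt.erase b) = Rp At (Bt.erase b) := rfl
    rw [hcv, hcv2]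
    field_simp
    exact mul_div_cancel_right₀ _ hRA
  have hE := exchange_one At Bt hdisj hne G hdegG
  rw [Finset.sum_congr rfl haT, Finset.sum_congr rfl hbT, ← Finset.mul_sum, hE]
  rw [← Finset.mul_sum]
  have hsq : (-1 : F) ^ A₁'.card * (-1 : F) ^ A₁'.card = 1 := by
    rw [← pow_add]
    exact Even.neg_one_pow ⟨A₁'.card, rfl⟩
  set S : F := ∑ b ∈ Bt, (∏ a ∈ At, ∏ b' ∈ Bt.erase b, (a - b')) * G.eval b /
    ∏ b' ∈ Bt.erase b, (b - b') with hS
  linear_combination (-(Const * (-1 : F) ^ (At.card - 1) * S)) * hsq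

lemma degree_prod_lin (s : Finset F) :
    (∏ c ∈ s, (Polynomial.C c - X)).degree = (s.card : WithBot ℕ) := by
  rw [degree_prod]
  have h1 : ∀ c ∈ s, (Polynomial.C c - X).degree = 1 := by
    intro c _
    have : Polynomial.C c - X = -(X - Polynomial.C c) := by ring
    rw [this, degree_neg, degree_X_sub_C]
  rw [Finset.sum_congr rfl h1, Finset.sum_const, nsmul_eq_mul, mul_one]

def Sk (g : F[X]) (A B : Finset F) (d k : ℕ) : F :=
  ∑ A₁ ∈ A.powersetCard (d - k), ∑ B₁ ∈ B.powersetCard k, Tm g A B A₁ B₁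

lemma step (g : F[X]) (A B : Finset F) (d : ℕ) (hAB : Disjoint A B)
    (hdm : d ≤ A.card) (hdn : d ≤ B.card)
    (hdeg : g.degree ≤ ((A.card + B.card - 2 * d : ℕ) : WithBot ℕ))
    (k : ℕ) (hk : k < d) :
    ((d - k : ℕ) : F) * Sk g A B d k
      = ((k + 1 : ℕ) : F) * ((-1 : F) ^ (A.card - 1) * Sk g A B d (k + 1)) := by
  obtain ⟨j, hdk⟩ : ∃ j, d - k = j + 1 := ⟨d - k - 1, by omega⟩
  have h2 : d - (k + 1) = j := by omega
  rw [Sk, Sk, hdk, h2]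
  have hL : ((j + 1 : ℕ) : F) * ∑ A₁ ∈ A.powersetCard (j + 1),
        ∑ B₁ ∈ B.powersetCard k, Tm g A B A₁ B₁
      = ∑ A₁ ∈ A.powersetCard (j + 1),
        (j + 1) • ∑ B₁ ∈ B.powersetCard k, Tm g A B A₁ B₁ := by
    rw [Finset.mul_sum]
    exact Finset.sum_congr rfl fun A₁ _ => (nsmul_eq_mul _ _).symm
  rw [hL, reindex_insert A j (fun A₁ => ∑ B₁ ∈ B.powersetCard k, Tm g A B A₁ B₁)]
  have hmain : ∀ A₁' ∈ A.powersetCard j,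
      ∑ a ∈ A \ A₁', ∑ B₁ ∈ B.powersetCard k, Tm g A B (insert a A₁') B₁
        = (-1 : F) ^ (A.card - 1) *
          ((k + 1) • ∑ B₁ ∈ B.powersetCard (k + 1), Tm g A B A₁' B₁) := by
    intro A₁' hA₁'
    obtain ⟨hsub, hcard⟩ := mem_powersetCard.mp hA₁'
    rw [Finset.sum_comm]
    have hjd : j ≤ d := by omega
    have hstep : ∀ B₁ ∈ B.powersetCard k,
        ∑ a ∈ A \ A₁', Tm g A B (insert a A₁') B₁
          = (-1 : F) ^ (A.card - 1) * ∑ b ∈ B \ B₁, Tm g A B A₁' (insert b B₁) := by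
      intro B₁ hB₁
      obtain ⟨hsubB, hcardB⟩ := mem_powersetCard.mp hB₁
      have hcsd : (A \ A₁').card = A.card - j := by
        rw [card_sdiff_of_subset hsub, hcard]
      have hcsdB : (B \ B₁).card = B.card - k := by rw [card_sdiff_of_subset hsubB, hcardB]
      have hne : (A \ A₁').Nonempty := by
        rw [← Finset.card_pos, hcsd]; omega
      have hdegG : (g * (∏ a'' ∈ A₁', (C a'' - X)) * (∏ b'' ∈ B₁, (C b'' - X))).degree
          < (((A \ A₁').card + (B \ B₁).card - 1 : ℕ) : WithBot ℕ) := by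
        rw [degree_mul, degree_mul, degree_prod_lin, degree_prod_lin, hcard, hcardB]
        calc g.degree + ((j : ℕ) : WithBot ℕ) + ((k : ℕ) : WithBot ℕ)
            ≤ ((A.card + B.card - 2*d : ℕ) : WithBot ℕ) + ((j : ℕ) : WithBot ℕ)
              + ((k : ℕ) : WithBot ℕ) := by
              exact add_le_add (add_le_add hdeg le_rfl) le_rfl
          _ = (((A.card + B.card - 2*d) + j + k : ℕ) : WithBot ℕ) := by
              push_cast; ring
          _ < (((A \ A₁').card + (B \ B₁).card - 1 : ℕ) : WithBot ℕ) := by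
              rw [hcsd, hcsdB, Nat.cast_lt]
              omega
      have hsc := step_core g A B A₁' B₁ hAB hsub hsubB hne hdegG
      rw [hsc, hcsd, hcard]
      congr 1
      rw [← pow_add]
      congr 1
      omega
    rw [Finset.sum_congr rfl hstep, ← Finset.mul_sum]
    congr 1
    rw [Finset.smul_sum, ← reindex_insert B k (fun B₁ => Tm g A B A₁' B₁)]
  rw [Finset.sum_congr rfl hmain, ← Finset.mul_sum]
  rw [Finset.smul_sum.symm]
  rw [nsmul_eq_mul]
  push_cast
  ring

lemma chain [CharZero F] (g : F[X]) (A B : Finset F) (d : ℕ) (hAB : Disjoint A B)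
    (hdm : d ≤ A.card) (hdn : d ≤ B.card)
    (hdeg : g.degree ≤ ((A.card + B.card - 2 * d : ℕ) : WithBot ℕ)) :
    ∀ k, k ≤ d → Sk g A B d k
      = (-1 : F) ^ ((A.card - 1) * k) * (d.choose k : F) * Sk g A B d 0 := by
  intro k
  induction k with
  | zero => intro _; simp
  | succ k ih =>
    intro hk1
    have hk : k < d := by omega
    have ihk := ih (by omega)
    have hstep := step g A B d hAB hdm hdn hdeg k hk
    rw [ihk] at hstep
    have hsq : (-1 : F) ^ (A.card - 1) * (-1 : F) ^ (A.card - 1) = 1 := by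
      rw [← pow_add]; exact Even.neg_one_pow ⟨A.card - 1, rfl⟩
    have hne : ((k + 1 : ℕ) : F) ≠ 0 := Nat.cast_ne_zero.mpr (Nat.succ_ne_zero k)
    have hc : ((k + 1 : ℕ) : F) * (-1 : F) ^ (A.card - 1) ≠ 0 :=
      mul_ne_zero hne (pow_ne_zero _ (neg_ne_zero.mpr one_ne_zero))
    have hpw : ((-1 : F) ^ ((A.card - 1) * (k + 1))) =
        (-1 : F) ^ (A.card - 1) * (-1 : F) ^ ((A.card - 1) * k) := by
      rw [← pow_add]; congr 1; ring
    have h2 : (-1 : F) ^ (A.card - 1) * (-1 : F) ^ ((A.card - 1) * (k + 1))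
        = (-1 : F) ^ ((A.card - 1) * k) := by
      rw [hpw, ← mul_assoc, hsq, one_mul]
    have hch : ((d.choose (k+1) : ℕ) : F) * ((k+1 : ℕ) : F)
        = ((d.choose k : ℕ) : F) * ((d - k : ℕ) : F) := by
      rw [← Nat.cast_mul, ← Nat.cast_mul, Nat.choose_succ_right_eq]
    apply mul_left_cancel₀ hc
    calc ((k + 1 : ℕ) : F) * (-1 : F) ^ (A.card - 1) * Sk g A B d (k + 1)
        = ((k + 1 : ℕ) : F) * ((-1 : F) ^ (A.card - 1) * Sk g A B d (k + 1)) := by ring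
      _ = ((d - k : ℕ) : F) * ((-1 : F) ^ ((A.card - 1) * k) * (d.choose k : F)
            * Sk g A B d 0) := hstep.symm
      _ = ((k + 1 : ℕ) : F) * (-1 : F) ^ (A.card - 1) *
            ((-1 : F) ^ ((A.card - 1) * (k + 1)) * (d.choose (k+1) : F) * Sk g A B d 0) := by
          rw [show ((k + 1 : ℕ) : F) * (-1 : F) ^ (A.card - 1) *
              ((-1 : F) ^ ((A.card - 1) * (k + 1)) * (d.choose (k+1) : F) * Sk g A B d 0)
            = ((k + 1 : ℕ) : F) * ((-1 : F) ^ (A.card - 1) * (-1 : F) ^ ((A.card - 1) * (k + 1)))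
              * (d.choose (k+1) : F) * Sk g A B d 0 from by ring, h2]
          linear_combination (-((-1 : F) ^ ((A.card - 1) * k) * Sk g A B d 0)) * hch

theorem main_generic [CharZero F] (g : F[X]) (A B : Finset F) (d : ℕ) (hAB : Disjoint A B)
    (hdm : d ≤ A.card) (hdn : d ≤ B.card)
    (hdeg : g.degree ≤ ((A.card + B.card - 2 * d : ℕ) : WithBot ℕ)) :
    ∑ A₁ ∈ A.powersetCard d, Rp (A \ A₁) B * (∏ a ∈ A₁, g.eval a) / Rp A₁ (A \ A₁)
      = (-1 : F) ^ (d * (A.card - d)) *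
        ∑ B₁ ∈ B.powersetCard d, Rp A (B \ B₁) * (∏ b ∈ B₁, g.eval b) / Rp B₁ (B \ B₁) := by
  have hch := chain g A B d hAB hdm hdn hdeg d le_rfl
  have h0 : Sk g A B d 0
      = ∑ A₁ ∈ A.powersetCard d, Rp (A \ A₁) B * (∏ a ∈ A₁, g.eval a) / Rp A₁ (A \ A₁) := by
    rw [Sk]
    refine Finset.sum_congr (by rw [Nat.sub_zero]) fun A₁ _ => ?_
    rw [powersetCard_zero, Finset.sum_singleton, Tm]
    simp [Rp]
  have hd : Sk g A B d d
      = ∑ B₁ ∈ B.powersetCard d, Rp A (B \ B₁) * (∏ b ∈ B₁, g.eval b) / Rp B₁ (B \ B₁) := by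
    rw [Sk, Nat.sub_self, powersetCard_zero, Finset.sum_singleton]
    refine Finset.sum_congr rfl fun B₁ _ => ?_
    rw [Tm]
    simp [Rp]
  rw [← h0, ← hd, hch]
  rcases Nat.eq_zero_or_pos d with hd0 | hd1
  · subst hd0; simp
  have hsgn : (-1 : F) ^ (d * (A.card - d)) * (-1 : F) ^ ((A.card - 1) * d) = 1 := by
    rw [← pow_add]
    refine Even.neg_one_pow ?_
    have h1 : A.card - 1 = (A.card - d) + (d - 1) := by omega
    have hexp : d * (A.card - d) + (A.card - 1) * d
        = 2 * (d * (A.card - d)) + (d - 1) * d := by rw [h1]; ring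
    rw [hexp]
    refine Even.add ⟨d * (A.card - d), by ring⟩ ?_
    have hev := Nat.even_mul_succ_self (d - 1)
    rwa [show d - 1 + 1 = d from by omega] at hev
  rw [Nat.choose_self]
  push_cast
  linear_combination (-(Sk g A B d 0)) * hsgn


lemma main_generic' [CharZero F] (g : F[X]) (A B : Finset F) (d : ℕ) (hAB : Disjoint A B)
    (hdm : d ≤ A.card) (hdn : d ≤ B.card)
    (hdeg : g.degree ≤ ((A.card + B.card - 2 * d : ℕ) : WithBot ℕ)) :
    ∑ A₁ ∈ A.powersetCard d,
        (∏ p ∈ A \ A₁, ∏ q ∈ B, (p - q)) * (∏ p ∈ A₁, g.eval p) /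
          (∏ p ∈ A₁, ∏ p' ∈ A \ A₁, (p - p'))
      = (-1 : F) ^ (d * (A.card - d)) *
        ∑ B₁ ∈ B.powersetCard d,
          (∏ p ∈ A, ∏ q ∈ B \ B₁, (p - q)) * (∏ q ∈ B₁, g.eval q) /
            (∏ q ∈ B₁, ∏ q' ∈ B \ B₁, (q - q')) := by
  have h := main_generic g A B d hAB hdm hdn hdeg
  simpa only [Rp] using h

end

open Finset

lemma image_eq_map {γ β : Type*} [DecidableEq β] (α : γ → β) (hα : Function.Injective α)
    (t : Finset γ) : t.image α = t.map ⟨α, hα⟩ := by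
  rw [Finset.map_eq_image]; rfl

lemma sum_powersetCard_image {γ β M : Type*} [DecidableEq γ] [DecidableEq β] [AddCommMonoid M]
    {α : γ → β} (hα : Function.Injective α) (t : Finset γ) (d : ℕ) (f : Finset β → M) :
    ∑ A₁ ∈ (t.image α).powersetCard d, f A₁ = ∑ S ∈ t.powersetCard d, f (S.image α) := by
  rw [image_eq_map α hα, Finset.powersetCard_map, Finset.sum_map]
  refine Finset.sum_congr rfl fun S _ => ?_
  have : (Finset.mapEmbedding (⟨α, hα⟩ : γ ↪ β)).toEmbedding S = S.map ⟨α, hα⟩ :=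
    Finset.mapEmbedding_apply
  rw [this, ← image_eq_map α hα]

lemma lhs_indexed {F : Type*} [Field F] [DecidableEq F] {m n r d : ℕ}
    (a : Fin m → F) (ha : Function.Injective a) (b : Fin n → F)
    (hb : Function.Injective b) (x : Fin r → F) :
    ∑ A₁ ∈ ((univ : Finset (Fin m)).image a).powersetCard d,
        (∏ p ∈ (univ : Finset (Fin m)).image a \ A₁, ∏ q ∈ (univ : Finset (Fin n)).image b, (p - q)) *
          (∏ l, ∏ p ∈ A₁, (x l - p)) /
          (∏ p ∈ A₁, ∏ p' ∈ (univ : Finset (Fin m)).image a \ A₁, (p - p'))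
      = ∑ S ∈ (univ : Finset (Fin m)).powersetCard d,
        (∏ i ∈ univ \ S, ∏ j, (a i - b j)) * (∏ l, ∏ i ∈ S, (x l - a i)) /
          (∏ i ∈ S, ∏ i' ∈ univ \ S, (a i - a i')) := by
  rw [sum_powersetCard_image ha]
  refine Finset.sum_congr rfl fun S _ => ?_
  rw [← Finset.image_sdiff _ _ ha]
  have hP1 : ∏ p ∈ (univ \ S).image a, ∏ q ∈ (univ : Finset (Fin n)).image b, (p - q)
      = ∏ i ∈ univ \ S, ∏ j, (a i - b j) := by
    rw [Finset.prod_image (fun p _ q _ h => ha h)]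
    exact Finset.prod_congr rfl fun i _ => Finset.prod_image (fun p _ q _ h => hb h)
  have hP2 : ∏ l, ∏ p ∈ S.image a, (x l - p) = ∏ l, ∏ i ∈ S, (x l - a i) :=
    Finset.prod_congr rfl fun l _ => Finset.prod_image (fun p _ q _ h => ha h)
  have hP3 : ∏ p ∈ S.image a, ∏ p' ∈ (univ \ S).image a, (p - p')
      = ∏ i ∈ S, ∏ i' ∈ univ \ S, (a i - a i') := by
    rw [Finset.prod_image (fun p _ q _ h => ha h)]
    exact Finset.prod_congr rfl fun i _ => Finset.prod_image (fun p _ q _ h => ha h)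
  rw [hP1, hP2, hP3]

lemma rhs_indexed {F : Type*} [Field F] [DecidableEq F] {m n r d : ℕ}
    (a : Fin m → F) (ha : Function.Injective a) (b : Fin n → F)
    (hb : Function.Injective b) (x : Fin r → F) :
    ∑ B₁ ∈ ((univ : Finset (Fin n)).image b).powersetCard d,
        (∏ p ∈ (univ : Finset (Fin m)).image a, ∏ q ∈ (univ : Finset (Fin n)).image b \ B₁, (p - q)) *
          (∏ l, ∏ q ∈ B₁, (x l - q)) /
          (∏ q ∈ B₁, ∏ q' ∈ (univ : Finset (Fin n)).image b \ B₁, (q - q'))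
      = ∑ T ∈ (univ : Finset (Fin n)).powersetCard d,
        (∏ i, ∏ j ∈ univ \ T, (a i - b j)) * (∏ l, ∏ j ∈ T, (x l - b j)) /
          (∏ j ∈ T, ∏ j' ∈ univ \ T, (b j - b j')) := by
  rw [sum_powersetCard_image hb]
  refine Finset.sum_congr rfl fun T _ => ?_
  rw [← Finset.image_sdiff _ _ hb]
  have hP1 : ∏ p ∈ (univ : Finset (Fin m)).image a, ∏ q ∈ (univ \ T).image b, (p - q)
      = ∏ i, ∏ j ∈ univ \ T, (a i - b j) := by
    rw [Finset.prod_image (fun p _ q _ h => ha h)]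
    exact Finset.prod_congr rfl fun i _ => Finset.prod_image (fun p _ q _ h => hb h)
  have hP2 : ∏ l, ∏ q ∈ T.image b, (x l - q) = ∏ l, ∏ j ∈ T, (x l - b j) :=
    Finset.prod_congr rfl fun l _ => Finset.prod_image (fun p _ q _ h => hb h)
  have hP3 : ∏ q ∈ T.image b, ∏ q' ∈ (univ \ T).image b, (q - q')
      = ∏ j ∈ T, ∏ j' ∈ univ \ T, (b j - b j') := by
    rw [Finset.prod_image (fun p _ q _ h => hb h)]
    exact Finset.prod_congr rfl fun i _ => Finset.prod_image (fun p _ q _ h => hb h)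
  rw [hP1, hP2, hP3]

open Finset

lemma vdm_split {F : Type*} [CommRing F] {γ : Type*} [DecidableEq γ] (a : γ → F)
    (s S : Finset γ) (hS : S ⊆ s) :
    ∏ i ∈ s, ∏ i' ∈ s.erase i, (a i - a i')
      = (∏ i ∈ S, ∏ i' ∈ s \ S, (a i - a i')) *
        ((∏ i ∈ S, ∏ i' ∈ S.erase i, (a i - a i')) *
         (∏ i ∈ s \ S, ∏ i' ∈ (s \ S).erase i, (a i - a i')) *
         (∏ i ∈ s \ S, ∏ i' ∈ S, (a i - a i'))) := by
  have hsplit : ∀ i ∈ S, ∏ i' ∈ s.erase i, (a i - a i')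
      = (∏ i' ∈ S.erase i, (a i - a i')) * ∏ i' ∈ s \ S, (a i - a i') := by
    intro i hi
    have h1 : s.erase i = S.erase i ∪ (s \ S) := by
      ext j
      simp only [mem_erase, mem_union, mem_sdiff]
      constructor
      · rintro ⟨hji, hjs⟩
        by_cases hjS : j ∈ S
        · exact Or.inl ⟨hji, hjS⟩
        · exact Or.inr ⟨hjs, hjS⟩
      · rintro (⟨hji, hjS⟩ | ⟨hjs, hjS⟩)
        · exact ⟨hji, hS hjS⟩
        · exact ⟨fun h => hjS (h ▸ hi), hjs⟩
    rw [h1, prod_union (disjoint_of_subset_left (erase_subset _ _) disjoint_sdiff)]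
  have hsplit2 : ∀ i ∈ s \ S, ∏ i' ∈ s.erase i, (a i - a i')
      = (∏ i' ∈ S, (a i - a i')) * ∏ i' ∈ (s \ S).erase i, (a i - a i') := by
    intro i hi
    have hiS : i ∉ S := (mem_sdiff.mp hi).2
    have his : i ∈ s := (mem_sdiff.mp hi).1
    have h1 : s.erase i = S ∪ (s \ S).erase i := by
      ext j
      simp only [mem_erase, mem_union, mem_sdiff]
      constructor
      · rintro ⟨hji, hjs⟩
        by_cases hjS : j ∈ S
        · exact Or.inl hjS
        · exact Or.inr ⟨hji, hjs, hjS⟩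
      · rintro (hjS | ⟨hji, hjs, hjS⟩)
        · exact ⟨fun h => hiS (h ▸ hjS), hS hjS⟩
        · exact ⟨hji, hjs⟩
    rw [h1, prod_union (disjoint_of_subset_right (erase_subset _ _) disjoint_sdiff)]
  rw [← prod_sdiff hS, Finset.prod_congr rfl hsplit, Finset.prod_congr rfl hsplit2,
    prod_mul_distrib, prod_mul_distrib]
  ring

lemma clear_sum {F : Type*} [Field F] {γ : Type*} [DecidableEq γ] (a : γ → F)
    (ha : Function.Injective a) (s : Finset γ) (d : ℕ) (N : Finset γ → F) (C : F) :
    (∑ S ∈ s.powersetCard d, N S / (∏ i ∈ S, ∏ i' ∈ s \ S, (a i - a i'))) *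
        ((∏ i ∈ s, ∏ i' ∈ s.erase i, (a i - a i')) * C)
      = ∑ S ∈ s.powersetCard d,
          N S * ((∏ i ∈ S, ∏ i' ∈ S.erase i, (a i - a i')) *
            (∏ i ∈ s \ S, ∏ i' ∈ (s \ S).erase i, (a i - a i')) *
            (∏ i ∈ s \ S, ∏ i' ∈ S, (a i - a i'))) * C := by
  rw [Finset.sum_mul]
  refine Finset.sum_congr rfl fun S hS => ?_
  have hsub : S ⊆ s := (mem_powersetCard.mp hS).1
  have hDA : (∏ i ∈ S, ∏ i' ∈ s \ S, (a i - a i')) ≠ 0 := by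
    refine prod_ne_zero_iff.mpr fun i hi => prod_ne_zero_iff.mpr fun i' hi' =>
      sub_ne_zero_of_ne fun h => ?_
    exact (mem_sdiff.mp hi').2 (ha h ▸ hi)
  rw [vdm_split a s S hsub]
  field_simp


noncomputable section

lemma degree_prod_lin' {F : Type*} [Field F] {ι : Type*} (s : Finset ι) (v : ι → F) :
    (∏ c ∈ s, (Polynomial.C (v c) - X)).degree = (s.card : WithBot ℕ) := by
  rw [degree_prod]
  have h1 : ∀ c ∈ s, (Polynomial.C (v c) - X).degree = 1 := by
    intro c _
    have h : Polynomial.C (v c) - X = -(X - Polynomial.C (v c)) := by ring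
    rw [h, degree_neg, degree_X_sub_C]
  rw [Finset.sum_congr rfl h1, Finset.sum_const, nsmul_eq_mul, mul_one]

variable (m n r d : ℕ)

abbrev Xa (i : Fin m) : MvPolynomial (Fin m ⊕ Fin n ⊕ Fin r) ℤ := MvPolynomial.X (Sum.inl i)
abbrev Xb (j : Fin n) : MvPolynomial (Fin m ⊕ Fin n ⊕ Fin r) ℤ :=
  MvPolynomial.X (Sum.inr (Sum.inl j))
abbrev Xx (l : Fin r) : MvPolynomial (Fin m ⊕ Fin n ⊕ Fin r) ℤ :=
  MvPolynomial.X (Sum.inr (Sum.inr l))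

def PL : MvPolynomial (Fin m ⊕ Fin n ⊕ Fin r) ℤ :=
  ∑ S ∈ (univ : Finset (Fin m)).powersetCard d,
    (∏ i ∈ univ \ S, ∏ j, (Xa m n r i - Xb m n r j)) *
      (∏ l, ∏ i ∈ S, (Xx m n r l - Xa m n r i)) *
      ((∏ i ∈ S, ∏ i' ∈ S.erase i, (Xa m n r i - Xa m n r i')) *
        (∏ i ∈ univ \ S, ∏ i' ∈ (univ \ S).erase i, (Xa m n r i - Xa m n r i')) *
        (∏ i ∈ univ \ S, ∏ i' ∈ S, (Xa m n r i - Xa m n r i'))) *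
      (∏ j : Fin n, ∏ j' ∈ univ.erase j, (Xb m n r j - Xb m n r j'))

def PR : MvPolynomial (Fin m ⊕ Fin n ⊕ Fin r) ℤ :=
  ∑ T ∈ (univ : Finset (Fin n)).powersetCard d,
    (∏ i, ∏ j ∈ univ \ T, (Xa m n r i - Xb m n r j)) *
      (∏ l, ∏ j ∈ T, (Xx m n r l - Xb m n r j)) *
      ((∏ j ∈ T, ∏ j' ∈ T.erase j, (Xb m n r j - Xb m n r j')) *
        (∏ j ∈ univ \ T, ∏ j' ∈ (univ \ T).erase j, (Xb m n r j - Xb m n r j')) *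
        (∏ j ∈ univ \ T, ∏ j' ∈ T, (Xb m n r j - Xb m n r j'))) *
      (∏ i : Fin m, ∏ i' ∈ univ.erase i, (Xa m n r i - Xa m n r i'))

variable {K : Type*} [CommRing K] [Algebra ℤ K] (a : Fin m → K) (b : Fin n → K) (x : Fin r → K)

def vfun : (Fin m ⊕ Fin n ⊕ Fin r) → K := Sum.elim a (Sum.elim b x)

lemma eval_PL :
    MvPolynomial.aeval (vfun m n r a b x) (PL m n r d)
      = ∑ S ∈ (univ : Finset (Fin m)).powersetCard d,
        (∏ i ∈ univ \ S, ∏ j, (a i - b j)) * (∏ l, ∏ i ∈ S, (x l - a i)) *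
          ((∏ i ∈ S, ∏ i' ∈ S.erase i, (a i - a i')) *
            (∏ i ∈ univ \ S, ∏ i' ∈ (univ \ S).erase i, (a i - a i')) *
            (∏ i ∈ univ \ S, ∏ i' ∈ S, (a i - a i'))) *
          (∏ j : Fin n, ∏ j' ∈ univ.erase j, (b j - b j')) := by
  simp [PL, vfun, map_sum, map_prod, map_mul, map_sub, MvPolynomial.aeval_X]

lemma eval_PR :
    MvPolynomial.aeval (vfun m n r a b x) (PR m n r d)
      = ∑ T ∈ (univ : Finset (Fin n)).powersetCard d,
        (∏ i, ∏ j ∈ univ \ T, (a i - b j)) * (∏ l, ∏ j ∈ T, (x l - b j)) *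
          ((∏ j ∈ T, ∏ j' ∈ T.erase j, (b j - b j')) *
            (∏ j ∈ univ \ T, ∏ j' ∈ (univ \ T).erase j, (b j - b j')) *
            (∏ j ∈ univ \ T, ∏ j' ∈ T, (b j - b j'))) *
          (∏ i : Fin m, ∏ i' ∈ univ.erase i, (a i - a i')) := by
  simp [PR, vfun, map_sum, map_prod, map_mul, map_sub, MvPolynomial.aeval_X]

end


theorem PL_eq_PR (m n r d : ℕ) (hdm : d ≤ m) (hdn : d ≤ n) (hr : r + 2 * d ≤ m + n) :
    PL m n r d = (-1 : MvPolynomial (Fin m ⊕ Fin n ⊕ Fin r) ℤ) ^ (d * (m - d)) * PR m n r d := by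
  set Rg := MvPolynomial (Fin m ⊕ Fin n ⊕ Fin r) ℤ with hRg
  let F := FractionRing Rg
  letI : DecidableEq F := Classical.decEq F
  have hιinj : Function.Injective (algebraMap Rg F) := IsFractionRing.injective Rg F
  haveI : CharZero F := charZero_of_injective_algebraMap hιinj
  set ι : Rg →+* F := algebraMap Rg F with hι
  set a : Fin m → F := fun i => ι (MvPolynomial.X (Sum.inl i)) with haa
  set b : Fin n → F := fun j => ι (MvPolynomial.X (Sum.inr (Sum.inl j))) with hbb
  set x : Fin r → F := fun l => ι (MvPolynomial.X (Sum.inr (Sum.inr l))) with hxx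
  have hall : ∀ v w : Fin m ⊕ Fin n ⊕ Fin r,
      ι (MvPolynomial.X v) = ι (MvPolynomial.X w) → v = w :=
    fun v w h => MvPolynomial.X_injective (hιinj h)
  have ha : Function.Injective a := fun i i' h => by
    have := hall _ _ h; simpa using this
  have hb : Function.Injective b := fun j j' h => by
    have := hall _ _ h; simpa using this
  have hanb : ∀ i j, a i ≠ b j := fun i j h => by
    have := hall _ _ h; simp at this
  -- the two finsets
  set A : Finset F := (univ : Finset (Fin m)).image a with hA
  set B : Finset F := (univ : Finset (Fin n)).image b with hB
  have hAcard : A.card = m := by rw [hA, card_image_of_injective _ ha, card_univ, Fintype.card_fin]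
  have hBcard : B.card = n := by rw [hB, card_image_of_injective _ hb, card_univ, Fintype.card_fin]
  have hAB : Disjoint A B := by
    rw [Finset.disjoint_left]
    intro p hp hq
    obtain ⟨i, _, rfl⟩ := mem_image.mp hp
    obtain ⟨j, _, hj⟩ := mem_image.mp hq
    exact hanb i j hj.symm
  -- the polynomial g
  set g : Polynomial F := ∏ l, (Polynomial.C (x l) - Polynomial.X) with hg
  have hdeg : g.degree ≤ ((A.card + B.card - 2 * d : ℕ) : WithBot ℕ) := by
    rw [hg, degree_prod_lin', card_univ, Fintype.card_fin, hAcard, hBcard, Nat.cast_le]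
    omega
  have hmain := main_generic' g A B d hAB (hAcard ▸ hdm) (hBcard ▸ hdn) hdeg
  -- convert g.eval products to x-products
  have hgev : ∀ (S : Finset F), (∏ p ∈ S, g.eval p) = ∏ l, ∏ p ∈ S, (x l - p) := by
    intro S
    rw [Finset.prod_comm]
    exact Finset.prod_congr rfl fun p _ => by simp [hg, eval_prod]
  have hmain2 :
      ∑ A₁ ∈ A.powersetCard d,
        (∏ p ∈ A \ A₁, ∏ q ∈ B, (p - q)) * (∏ l, ∏ p ∈ A₁, (x l - p)) /
          (∏ p ∈ A₁, ∏ p' ∈ A \ A₁, (p - p'))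
      = (-1 : F) ^ (d * (m - d)) *
        ∑ B₁ ∈ B.powersetCard d,
          (∏ p ∈ A, ∏ q ∈ B \ B₁, (p - q)) * (∏ l, ∏ q ∈ B₁, (x l - q)) /
            (∏ q ∈ B₁, ∏ q' ∈ B \ B₁, (q - q')) := by
    rw [hAcard] at hmain
    rw [Finset.sum_congr rfl (fun A₁ (_ : A₁ ∈ A.powersetCard d) => by rw [← hgev A₁]), hmain]
    exact congrArg _ (Finset.sum_congr rfl (fun B₁ _ => by rw [← hgev B₁]))
  rw [lhs_indexed a ha b hb x, rhs_indexed a ha b hb x] at hmain2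
  -- clear denominators
  set VA : F := ∏ i : Fin m, ∏ i' ∈ univ.erase i, (a i - a i') with hVA
  set VB : F := ∏ j : Fin n, ∏ j' ∈ univ.erase j, (b j - b j') with hVB
  have hmul := congrArg (fun z => z * (VA * VB)) hmain2
  rw [clear_sum a ha univ d
      (fun S => (∏ i ∈ univ \ S, ∏ j, (a i - b j)) * (∏ l, ∏ i ∈ S, (x l - a i))) VB] at hmul
  have hswap : ((-1 : F) ^ (d * (m - d)) *
        ∑ T ∈ (univ : Finset (Fin n)).powersetCard d,
          (∏ i, ∏ j ∈ univ \ T, (a i - b j)) * (∏ l, ∏ j ∈ T, (x l - b j)) /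
            (∏ j ∈ T, ∏ j' ∈ univ \ T, (b j - b j'))) * (VA * VB)
      = (-1 : F) ^ (d * (m - d)) *
        ((∑ T ∈ (univ : Finset (Fin n)).powersetCard d,
          (∏ i, ∏ j ∈ univ \ T, (a i - b j)) * (∏ l, ∏ j ∈ T, (x l - b j)) /
            (∏ j ∈ T, ∏ j' ∈ univ \ T, (b j - b j'))) * (VB * VA)) := by ring
  rw [hswap, clear_sum b hb univ d
      (fun T => (∏ i, ∏ j ∈ univ \ T, (a i - b j)) * (∏ l, ∏ j ∈ T, (x l - b j))) VA] at hmul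
  -- identify with ι images of PL and PR
  have hφ : ∀ p : Rg, ι p = MvPolynomial.aeval (vfun m n r a b x) p := by
    intro p
    induction p using MvPolynomial.induction_on with
    | C z =>
      have h1 : (MvPolynomial.C z : Rg) = ((z : ℤ) : Rg) :=
        eq_intCast (MvPolynomial.C : ℤ →+* Rg) z
      rw [h1, map_intCast, map_intCast]
    | add p q hp hq => rw [map_add, map_add, hp, hq]
    | mul_X p v hp =>
      rw [map_mul, map_mul, hp, MvPolynomial.aeval_X]
      congr 1
      rcases v with i | j | l <;> rfl
  have hPLval : ι (PL m n r d) = MvPolynomial.aeval (vfun m n r a b x) (PL m n r d) := hφ _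
  have hPRval : ι (PR m n r d) = MvPolynomial.aeval (vfun m n r a b x) (PR m n r d) := hφ _
  apply hιinj
  rw [hPLval, map_mul, map_pow, map_neg, map_one, hPRval, eval_PL, eval_PR]
  convert hmul using 2

/-- for |A|,|B| ≥ d and |X| ≤ |A|+|B|−2d,
Σ_{A₁⊔A₂=A,|A₁|=d} R(A₂,B)R(X,A₁)/R(A₁,A₂)
  = (−1)^{d(|A|−d)} Σ_{B₁⊔B₂=B,|B₁|=d} R(A,B₂)R(X,B₁)/R(B₁,B₂). -/
theorem exchange_lemma_large {K : Type*} [Field K] [DecidableEq K] (d r : ℕ) (A B : Finset K)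
    (hA : d ≤ A.card) (hB : d ≤ B.card) (hr : r + 2 * d ≤ A.card + B.card) (x : Fin r → K) :
    ∑ A₁ ∈ A.powersetCard d,
        (∏ a ∈ A \ A₁, ∏ b ∈ B, (a - b)) * (∏ i, ∏ a ∈ A₁, (x i - a)) /
          (∏ a ∈ A₁, ∏ a' ∈ A \ A₁, (a - a'))
      = (-1 : K) ^ (d * (A.card - d)) *
        ∑ B₁ ∈ B.powersetCard d,
          (∏ a ∈ A, ∏ b ∈ B \ B₁, (a - b)) * (∏ i, ∏ b ∈ B₁, (x i - b)) /
            (∏ b ∈ B₁, ∏ b' ∈ B \ B₁, (b - b')) := by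
  classical
  set m := A.card with hm
  set n := B.card with hn
  set α : Fin m → K := fun i => ((A.equivFin.symm i : A) : K) with hα
  set β : Fin n → K := fun j => ((B.equivFin.symm j : B) : K) with hβ
  have hαinj : Function.Injective α :=
    Subtype.coe_injective.comp (A.equivFin.symm.injective)
  have hβinj : Function.Injective β :=
    Subtype.coe_injective.comp (B.equivFin.symm.injective)
  have hαim : (univ : Finset (Fin m)).image α = A := by
    ext k
    simp only [mem_image, mem_univ, true_and]
    constructor
    · rintro ⟨i, rfl⟩; exact (A.equivFin.symm i).2
    · intro hk; exact ⟨A.equivFin ⟨k, hk⟩, by simp [hα]⟩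
  have hβim : (univ : Finset (Fin n)).image β = B := by
    ext k
    simp only [mem_image, mem_univ, true_and]
    constructor
    · rintro ⟨j, rfl⟩; exact (B.equivFin.symm j).2
    · intro hk; exact ⟨B.equivFin ⟨k, hk⟩, by simp [hβ]⟩
  rw [← hαim, ← hβim]
  rw [lhs_indexed α hαinj β hβinj x, rhs_indexed α hαinj β hβinj x]
  -- evaluate polynomial identity
  have hpoly := PL_eq_PR m n r d hA hB hr
  have hev := congrArg (MvPolynomial.aeval (vfun m n r α β x)) hpoly
  rw [eval_PL, map_mul, map_pow, map_neg, map_one, eval_PR] at hev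
  -- clearing
  set VA : K := ∏ i : Fin m, ∏ i' ∈ univ.erase i, (α i - α i') with hVA
  set VB : K := ∏ j : Fin n, ∏ j' ∈ univ.erase j, (β j - β j') with hVB
  have hVAne : VA ≠ 0 := by
    refine prod_ne_zero_iff.mpr fun i _ => prod_ne_zero_iff.mpr fun i' hi' =>
      sub_ne_zero_of_ne fun h => ?_
    exact (mem_erase.mp hi').1 (hαinj h).symm
  have hVBne : VB ≠ 0 := by
    refine prod_ne_zero_iff.mpr fun j _ => prod_ne_zero_iff.mpr fun j' hj' =>
      sub_ne_zero_of_ne fun h => ?_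
    exact (mem_erase.mp hj').1 (hβinj h).symm
  have e1 := clear_sum α hαinj univ d
    (fun S => (∏ i ∈ univ \ S, ∏ j, (α i - β j)) * (∏ l, ∏ i ∈ S, (x l - α i))) VB
  have e2 := clear_sum β hβinj univ d
    (fun T => (∏ i, ∏ j ∈ univ \ T, (α i - β j)) * (∏ l, ∏ j ∈ T, (x l - β j))) VA
  refine mul_right_cancel₀ (b := VA * VB) (mul_ne_zero hVAne hVBne) ?_
  have e3 : (∑ S ∈ (univ : Finset (Fin m)).powersetCard d,
      (fun S => (∏ i ∈ univ \ S, ∏ j, (α i - β j)) * (∏ l, ∏ i ∈ S, (x l - α i))) S *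
        ((∏ i ∈ S, ∏ i' ∈ S.erase i, (α i - α i')) *
          (∏ i ∈ univ \ S, ∏ i' ∈ (univ \ S).erase i, (α i - α i')) *
          (∏ i ∈ univ \ S, ∏ i' ∈ S, (α i - α i'))) * VB)
      = (-1 : K) ^ (d * (m - d)) *
        ∑ T ∈ (univ : Finset (Fin n)).powersetCard d,
      (fun T => (∏ i, ∏ j ∈ univ \ T, (α i - β j)) * (∏ l, ∏ j ∈ T, (x l - β j))) T *
        ((∏ j ∈ T, ∏ j' ∈ T.erase j, (β j - β j')) *
          (∏ j ∈ univ \ T, ∏ j' ∈ (univ \ T).erase j, (β j - β j')) *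
          (∏ j ∈ univ \ T, ∏ j' ∈ T, (β j - β j'))) * VA := by
    convert hev using 2
  linear_combination e1 + e3 - (-1 : K) ^ (d * (m - d)) * e2
end

section
/- Let d ≥ 0, let A, B ⊆ K be finite sets with |A| ≥ d and |B| < d, and let X be a set of variables with |X| ≤ |A| + |B| − 2d. Then Σ_{A₁⊔A₂=A, |A₁|=d, |A₂|=|A|−d} R(A₂,B)·R(X,A₁)/R(A₁,A₂) = 0. -/
open Finset Equiv Matrix

namespace SSV

variable {K : Type*} [Field K] [DecidableEq K] {d m : ℕ}

/-- the matrix of "rows": row indexed by `c : Fin d ⊕ Fin m` (point index via `finSumFinEquiv`),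
column indexed by `c' : Fin d ⊕ Fin m`. -/
def rowsV (a ξ β : Fin (d + m) → K) (c c' : Fin d ⊕ Fin m) : K :=
  Sum.elim (fun j : Fin d => ξ (finSumFinEquiv c) * a (finSumFinEquiv c) ^ (j : ℕ))
    (fun k : Fin m => β (finSumFinEquiv c) * a (finSumFinEquiv c) ^ (k : ℕ)) c'

noncomputable def aMap (d m : ℕ) (K : Type*) [Field K] [DecidableEq K] :
    ((Fin d ⊕ Fin m) → K) [⋀^Fin d]→ₗ[K] K :=
  (Matrix.detRowAlternating).compLinearMap (LinearMap.funLeft K K Sum.inl)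

noncomputable def bMap (d m : ℕ) (K : Type*) [Field K] [DecidableEq K] :
    ((Fin d ⊕ Fin m) → K) [⋀^Fin m]→ₗ[K] K :=
  (Matrix.detRowAlternating).compLinearMap (LinearMap.funLeft K K Sum.inr)

def uEmb (S : Finset (Fin (d + m))) (hS : S.card = d) : Fin d → Fin (d + m) :=
  S.orderEmbOfFin hS

lemma card_compl_S (S : Finset (Fin (d + m))) (hS : S.card = d) : Sᶜ.card = m := by
  rw [Finset.card_compl, hS, Fintype.card_fin]; omega

def wEmb (S : Finset (Fin (d + m))) (hS : S.card = d) : Fin m → Fin (d + m) :=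
  Sᶜ.orderEmbOfFin (card_compl_S S hS)

lemma uEmb_mem (S : Finset (Fin (d + m))) (hS : S.card = d) (i : Fin d) : uEmb S hS i ∈ S :=
  Finset.orderEmbOfFin_mem S hS i

lemma wEmb_mem (S : Finset (Fin (d + m))) (hS : S.card = d) (k : Fin m) : wEmb S hS k ∉ S := by
  have h := Finset.orderEmbOfFin_mem Sᶜ (card_compl_S S hS) k
  rw [Finset.mem_compl] at h
  exact h

lemma elim_bij (S : Finset (Fin (d + m))) (hS : S.card = d) :
    Function.Bijective (Sum.elim (uEmb S hS) (wEmb S hS)) := by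
  rw [Fintype.bijective_iff_injective_and_card]
  constructor
  · rintro (i | k) (i' | k') h
    · simp only [Sum.elim_inl] at h
      exact congrArg Sum.inl ((S.orderEmbOfFin hS).injective h)
    · simp only [Sum.elim_inl, Sum.elim_inr] at h
      exact absurd (h ▸ uEmb_mem S hS i) (wEmb_mem S hS k')
    · simp only [Sum.elim_inl, Sum.elim_inr] at h
      exact absurd (h.symm ▸ uEmb_mem S hS i') (wEmb_mem S hS k)
    · simp only [Sum.elim_inr] at h
      exact congrArg Sum.inr ((Sᶜ.orderEmbOfFin (card_compl_S S hS)).injective h)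
  · simp

/-- enumeration of `S`, `Sᶜ` as an equiv. -/
noncomputable def eqS (S : Finset (Fin (d + m))) (hS : S.card = d) :
    (Fin d ⊕ Fin m) ≃ Fin (d + m) :=
  Equiv.ofBijective _ (elim_bij S hS)

/-- permutation of `Fin d ⊕ Fin m` associated to `S`. -/
noncomputable def permS (S : Finset (Fin (d + m))) (hS : S.card = d) :
    Equiv.Perm (Fin d ⊕ Fin m) :=
  (eqS S hS).trans finSumFinEquiv.symm

/-- permutation of `Fin (d+m)` associated to `S`. -/
noncomputable def permN (S : Finset (Fin (d + m))) (hS : S.card = d) :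
    Equiv.Perm (Fin (d + m)) :=
  finSumFinEquiv.symm.trans (eqS S hS)

lemma permS_apply (S : Finset (Fin (d + m))) (hS : S.card = d) (c : Fin d ⊕ Fin m) :
    permS S hS c = finSumFinEquiv.symm (Sum.elim (uEmb S hS) (wEmb S hS) c) := rfl

lemma permN_apply (S : Finset (Fin (d + m))) (hS : S.card = d) (x : Fin (d + m)) :
    permN S hS x = Sum.elim (uEmb S hS) (wEmb S hS) (finSumFinEquiv.symm x) := rfl

lemma sign_permS (S : Finset (Fin (d + m))) (hS : S.card = d) :
    Equiv.Perm.sign (permS S hS) = Equiv.Perm.sign (permN S hS) := by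
  have h : permS S hS = (finSumFinEquiv.symm).permCongr (permN S hS) := by
    ext c
    simp [permS, permN, Equiv.permCongr_apply, eqS]
  rw [h, Equiv.Perm.sign_permCongr]

end SSV

section Chunk2
open SSV
set_option linter.unusedSectionVars false
variable {K : Type*} [Field K] [DecidableEq K] {d m : ℕ}

lemma prod_Ioi_split (g : Fin d ⊕ Fin m → K) :
    (∏ i : Fin (d + m), ∏ j ∈ Finset.Ioi i,
        (g (finSumFinEquiv.symm j) - g (finSumFinEquiv.symm i))) =
      ((∏ i : Fin d, ∏ j ∈ Finset.Ioi i, (g (Sum.inl j) - g (Sum.inl i))) *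
          (∏ k : Fin m, ∏ l ∈ Finset.Ioi k, (g (Sum.inr l) - g (Sum.inr k)))) *
        ∏ i : Fin d, ∏ k : Fin m, (g (Sum.inr k) - g (Sum.inl i)) := by
  have hIoi : ∀ {n : ℕ} (x : Fin n) (F : Fin n → K),
      (∏ j ∈ Finset.Ioi x, F j) = ∏ j : Fin n, if x < j then F j else 1 := by
    intro n x F
    rw [show Finset.Ioi x = Finset.univ.filter (fun j => x < j) from by ext j; simp,
      Finset.prod_filter]
  calc
    (∏ i : Fin (d + m), ∏ j ∈ Finset.Ioi i,
        (g (finSumFinEquiv.symm j) - g (finSumFinEquiv.symm i)))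
      = ∏ c : Fin d ⊕ Fin m, ∏ c' : Fin d ⊕ Fin m,
          (if finSumFinEquiv c < finSumFinEquiv c' then (g c' - g c) else 1) := by
        rw [← Equiv.prod_comp finSumFinEquiv
          (fun i => ∏ j ∈ Finset.Ioi i, (g (finSumFinEquiv.symm j) - g (finSumFinEquiv.symm i)))]
        refine Finset.prod_congr rfl fun c _ => ?_
        rw [hIoi]
        rw [← Equiv.prod_comp finSumFinEquiv
          (fun j => if finSumFinEquiv c < j then (g (finSumFinEquiv.symm j) - g (finSumFinEquiv.symm (finSumFinEquiv c))) else 1)]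
        simp [Equiv.symm_apply_apply]
    _ = ((∏ i : Fin d, ∏ j ∈ Finset.Ioi i, (g (Sum.inl j) - g (Sum.inl i))) *
          (∏ k : Fin m, ∏ l ∈ Finset.Ioi k, (g (Sum.inr l) - g (Sum.inr k)))) *
        ∏ i : Fin d, ∏ k : Fin m, (g (Sum.inr k) - g (Sum.inl i)) := by
        rw [Fintype.prod_sum_type]
        have h1 : ∀ i : Fin d, (∏ c' : Fin d ⊕ Fin m,
            (if finSumFinEquiv (Sum.inl i) < finSumFinEquiv c' then (g c' - g (Sum.inl i)) else 1))
            = (∏ j ∈ Finset.Ioi i, (g (Sum.inl j) - g (Sum.inl i))) *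
              ∏ k : Fin m, (g (Sum.inr k) - g (Sum.inl i)) := by
          intro i
          rw [Fintype.prod_sum_type]
          have e1 : (∏ j : Fin d,
              (if finSumFinEquiv ((Sum.inl i : Fin d ⊕ Fin m)) < finSumFinEquiv ((Sum.inl j : Fin d ⊕ Fin m)) then (g (Sum.inl j) - g (Sum.inl i)) else 1))
              = ∏ j ∈ Finset.Ioi i, (g (Sum.inl j) - g (Sum.inl i)) := by
            rw [hIoi]
            refine Finset.prod_congr rfl fun j _ => ?_
            have hc : (finSumFinEquiv ((Sum.inl i : Fin d ⊕ Fin m)) < finSumFinEquiv ((Sum.inl j : Fin d ⊕ Fin m))) ↔ i < j := by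
              simp only [finSumFinEquiv_apply_left, Fin.lt_def, Fin.coe_castAdd]
            by_cases h : i < j
            · rw [if_pos (hc.mpr h), if_pos h]
            · rw [if_neg (fun hh => h (hc.mp hh)), if_neg h]
          have e2 : (∏ k : Fin m,
              (if finSumFinEquiv ((Sum.inl i : Fin d ⊕ Fin m)) < finSumFinEquiv ((Sum.inr k : Fin d ⊕ Fin m)) then (g (Sum.inr k) - g (Sum.inl i)) else 1))
              = ∏ k : Fin m, (g (Sum.inr k) - g (Sum.inl i)) := by
            refine Finset.prod_congr rfl fun k _ => ?_
            have hc : finSumFinEquiv (Sum.inl i) < finSumFinEquiv (Sum.inr k) := by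
              simp only [finSumFinEquiv_apply_left, finSumFinEquiv_apply_right, Fin.lt_def,
                Fin.coe_castAdd, Fin.coe_natAdd]
              omega
            rw [if_pos hc]
          rw [e1, e2]
        have h2 : ∀ k : Fin m, (∏ c' : Fin d ⊕ Fin m,
            (if finSumFinEquiv (Sum.inr k) < finSumFinEquiv c' then (g c' - g (Sum.inr k)) else 1))
            = ∏ l ∈ Finset.Ioi k, (g (Sum.inr l) - g (Sum.inr k)) := by
          intro k
          rw [Fintype.prod_sum_type]
          have e1 : (∏ j : Fin d,
              (if finSumFinEquiv ((Sum.inr k : Fin d ⊕ Fin m)) < finSumFinEquiv ((Sum.inl j : Fin d ⊕ Fin m)) then (g (Sum.inl j) - g (Sum.inr k)) else 1)) = 1 := by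
            refine Finset.prod_eq_one fun j _ => ?_
            rw [if_neg]
            simp only [finSumFinEquiv_apply_left, finSumFinEquiv_apply_right, Fin.lt_def,
              Fin.coe_castAdd, Fin.coe_natAdd]
            omega
          have e2 : (∏ l : Fin m,
              (if finSumFinEquiv ((Sum.inr k : Fin d ⊕ Fin m)) < finSumFinEquiv ((Sum.inr l : Fin d ⊕ Fin m)) then (g (Sum.inr l) - g (Sum.inr k)) else 1))
              = ∏ l ∈ Finset.Ioi k, (g (Sum.inr l) - g (Sum.inr k)) := by
            rw [hIoi]
            refine Finset.prod_congr rfl fun l _ => ?_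
            have hc : (finSumFinEquiv ((Sum.inr k : Fin d ⊕ Fin m)) < finSumFinEquiv ((Sum.inr l : Fin d ⊕ Fin m))) ↔ k < l := by
              simp only [finSumFinEquiv_apply_right, Fin.lt_def, Fin.coe_natAdd]
              omega
            by_cases h : k < l
            · rw [if_pos (hc.mpr h), if_pos h]
            · rw [if_neg (fun hh => h (hc.mp hh)), if_neg h]
          rw [e1, e2, one_mul]
        rw [Finset.prod_congr rfl fun i _ => h1 i, Finset.prod_congr rfl fun k _ => h2 k,
          Finset.prod_mul_distrib]
        ring

end Chunk2

section Chunk3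
open SSV
set_option linter.unusedSectionVars false
variable {K : Type*} [Field K] [DecidableEq K] {d m : ℕ}

lemma sign_det_relation (a : Fin (d + m) → K) (S : Finset (Fin (d + m))) (hS : S.card = d) :
    ((Equiv.Perm.sign (permS S hS) : ℤ) : K) * (Matrix.vandermonde a).det =
      (Matrix.vandermonde (a ∘ uEmb S hS)).det * (Matrix.vandermonde (a ∘ wEmb S hS)).det *
        ∏ i : Fin d, ∏ k : Fin m, (a (wEmb S hS k) - a (uEmb S hS i)) := by
  have hdp := Matrix.det_permute (permN S hS) (Matrix.vandermonde a)
  have hsub : (Matrix.vandermonde a).submatrix (permN S hS) id =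
      Matrix.vandermonde (fun x => a (permN S hS x)) := by
    ext i j
    simp [Matrix.vandermonde_apply]
  rw [hsub] at hdp
  have hsplit : (Matrix.vandermonde (fun x => a (permN S hS x))).det =
      (Matrix.vandermonde (a ∘ uEmb S hS)).det * (Matrix.vandermonde (a ∘ wEmb S hS)).det *
        ∏ i : Fin d, ∏ k : Fin m, (a (wEmb S hS k) - a (uEmb S hS i)) := by
    rw [Matrix.det_vandermonde]
    have : ∀ x : Fin (d + m), a (permN S hS x)
        = (fun c => a (Sum.elim (uEmb S hS) (wEmb S hS) c)) (finSumFinEquiv.symm x) := by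
      intro x; rw [permN_apply]
    calc
      (∏ i : Fin (d+m), ∏ j ∈ Finset.Ioi i, (a (permN S hS j) - a (permN S hS i)))
          = ∏ i : Fin (d+m), ∏ j ∈ Finset.Ioi i,
              ((fun c => a (Sum.elim (uEmb S hS) (wEmb S hS) c)) (finSumFinEquiv.symm j)
                - (fun c => a (Sum.elim (uEmb S hS) (wEmb S hS) c)) (finSumFinEquiv.symm i)) := by
            refine Finset.prod_congr rfl fun i _ => Finset.prod_congr rfl fun j _ => ?_
            rw [this i, this j]
      _ = _ := by
            rw [prod_Ioi_split (fun c => a (Sum.elim (uEmb S hS) (wEmb S hS) c))]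
            rw [Matrix.det_vandermonde, Matrix.det_vandermonde]
            simp only [Sum.elim_inl, Sum.elim_inr, Function.comp_apply]
  rw [hsplit] at hdp
  rw [sign_permS, ← hdp]
end Chunk3

section Chunk4
open SSV
set_option linter.unusedSectionVars false
set_option maxHeartbeats 1000000
variable {K : Type*} [Field K] [DecidableEq K] {d m : ℕ}

lemma prod_over_S (f : Fin (d + m) → K) (S : Finset (Fin (d + m))) (hS : S.card = d) :
    (∏ s ∈ S, f s) = ∏ i : Fin d, f (uEmb S hS i) := by
  have himg : Finset.image (uEmb S hS) Finset.univ = S := by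
    ext y
    simp only [Finset.mem_image, Finset.mem_univ, true_and]
    constructor
    · rintro ⟨i, rfl⟩; exact uEmb_mem S hS i
    · intro hy
      have : y ∈ Set.range (S.orderEmbOfFin hS) := by
        rw [Finset.range_orderEmbOfFin]; exact hy
      obtain ⟨i, hi⟩ := this
      exact ⟨i, hi⟩
  conv_lhs => rw [← himg]
  rw [Finset.prod_image]
  intro i _ j _ h
  exact (S.orderEmbOfFin hS).injective h

lemma prod_over_Sc (f : Fin (d + m) → K) (S : Finset (Fin (d + m))) (hS : S.card = d) :
    (∏ t ∈ Sᶜ, f t) = ∏ k : Fin m, f (wEmb S hS k) := by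
  have himg : Finset.image (wEmb S hS) Finset.univ = Sᶜ := by
    ext y
    simp only [Finset.mem_image, Finset.mem_univ, true_and]
    constructor
    · rintro ⟨k, rfl⟩
      exact Finset.mem_compl.mpr (wEmb_mem S hS k)
    · intro hy
      have : y ∈ Set.range (Sᶜ.orderEmbOfFin (card_compl_S S hS)) := by
        rw [Finset.range_orderEmbOfFin]; exact hy
      obtain ⟨k, hk⟩ := this
      exact ⟨k, hk⟩
  conv_lhs => rw [← himg]
  rw [Finset.prod_image]
  intro i _ j _ h
  exact (Sᶜ.orderEmbOfFin (card_compl_S S hS)).injective h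

lemma cross_ne_zero (a : Fin (d + m) → K) (ha : Function.Injective a)
    (S : Finset (Fin (d + m))) (hS : S.card = d) :
    (∏ i : Fin d, ∏ k : Fin m, (a (wEmb S hS k) - a (uEmb S hS i))) ≠ 0 := by
  rw [Finset.prod_ne_zero_iff]
  intro i _
  rw [Finset.prod_ne_zero_iff]
  intro k _
  rw [sub_ne_zero]
  intro h
  exact wEmb_mem S hS k (ha h ▸ uEmb_mem S hS i)

lemma denom_eq (a : Fin (d + m) → K) (S : Finset (Fin (d + m))) (hS : S.card = d) :
    (∏ s ∈ S, ∏ t ∈ Sᶜ, (a s - a t)) =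
      (-1 : K) ^ (d * m) * ∏ i : Fin d, ∏ k : Fin m, (a (wEmb S hS k) - a (uEmb S hS i)) := by
  rw [prod_over_S (fun s => ∏ t ∈ Sᶜ, (a s - a t)) S hS]
  have : ∀ i : Fin d, (∏ t ∈ Sᶜ, (a (uEmb S hS i) - a t)) =
      (-1 : K) ^ m * ∏ k : Fin m, (a (wEmb S hS k) - a (uEmb S hS i)) := by
    intro i
    rw [prod_over_Sc (fun t => (a (uEmb S hS i) - a t)) S hS]
    have : ∀ k : Fin m, a (uEmb S hS i) - a (wEmb S hS k)
        = (-1) * (a (wEmb S hS k) - a (uEmb S hS i)) := by intro k; ring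
    rw [Finset.prod_congr rfl fun k _ => this k, Finset.prod_mul_distrib]
    simp
  rw [Finset.prod_congr rfl fun i _ => this i, Finset.prod_mul_distrib, Finset.prod_const,
    Finset.card_univ, Fintype.card_fin, ← pow_mul, mul_comm m d]

lemma term_value (a ξ β : Fin (d + m) → K) (ha : Function.Injective a)
    (S : Finset (Fin (d + m))) (hS : S.card = d) :
    (TensorProduct.lid K K) (AlternatingMap.domCoprod.summand (aMap d m K) (bMap d m K)
        (Quotient.mk'' (permS S hS)) (rowsV a ξ β)) =
      (-1 : K) ^ (d * m) * (Matrix.vandermonde a).det *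
        ((∏ t ∈ Sᶜ, β t) * (∏ s ∈ S, ξ s) / (∏ s ∈ S, ∏ t ∈ Sᶜ, (a s - a t))) := by
  rw [AlternatingMap.domCoprod.summand_mk'']
  -- compute the applied value
  have hrowl : ∀ i : Fin d, rowsV a ξ β (permS S hS (Sum.inl i)) =
      fun c' => Sum.elim (fun j : Fin d => ξ (uEmb S hS i) * a (uEmb S hS i) ^ (j : ℕ))
        (fun k : Fin m => β (uEmb S hS i) * a (uEmb S hS i) ^ (k : ℕ)) c' := by
    intro i
    funext c'
    simp [rowsV, permS_apply, Equiv.apply_symm_apply]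
  have hrowr : ∀ k : Fin m, rowsV a ξ β (permS S hS (Sum.inr k)) =
      fun c' => Sum.elim (fun j : Fin d => ξ (wEmb S hS k) * a (wEmb S hS k) ^ (j : ℕ))
        (fun l : Fin m => β (wEmb S hS k) * a (wEmb S hS k) ^ (l : ℕ)) c' := by
    intro k
    funext c'
    simp [rowsV, permS_apply, Equiv.apply_symm_apply]
  simp only [MultilinearMap.smul_apply, MultilinearMap.domDomCongr_apply,
    MultilinearMap.domCoprod_apply, AlternatingMap.coe_multilinearMap]
  rw [Units.smul_def, map_zsmul, TensorProduct.lid_tmul, smul_eq_mul]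
  have hA : (aMap d m K) (fun i => rowsV a ξ β (permS S hS (Sum.inl i))) =
      (∏ i : Fin d, ξ (uEmb S hS i)) * (Matrix.vandermonde (a ∘ uEmb S hS)).det := by
    show Matrix.detRowAlternating
        (fun i => LinearMap.funLeft K K Sum.inl (rowsV a ξ β (permS S hS (Sum.inl i)))) = _
    have : (fun i => LinearMap.funLeft K K Sum.inl (rowsV a ξ β (permS S hS (Sum.inl i)))) =
        fun i j => ξ (uEmb S hS i) * (Matrix.vandermonde (a ∘ uEmb S hS)) i j := by
      funext i j
      rw [hrowl i]
      simp [LinearMap.funLeft_apply, Matrix.vandermonde_apply]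
    rw [this]
    exact Matrix.det_mul_column _ _
  have hB : (bMap d m K) (fun k => rowsV a ξ β (permS S hS (Sum.inr k))) =
      (∏ k : Fin m, β (wEmb S hS k)) * (Matrix.vandermonde (a ∘ wEmb S hS)).det := by
    show Matrix.detRowAlternating
        (fun k => LinearMap.funLeft K K Sum.inr (rowsV a ξ β (permS S hS (Sum.inr k)))) = _
    have : (fun k => LinearMap.funLeft K K Sum.inr (rowsV a ξ β (permS S hS (Sum.inr k)))) =
        fun k l => β (wEmb S hS k) * (Matrix.vandermonde (a ∘ wEmb S hS)) k l := by
      funext k l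
      rw [hrowr k]
      simp [LinearMap.funLeft_apply, Matrix.vandermonde_apply]
    rw [this]
    exact Matrix.det_mul_column _ _
  rw [hA, hB]
  -- now pure field arithmetic
  set sgn : K := ((Equiv.Perm.sign (permS S hS) : ℤ) : K) with hsgn
  have hzs : ∀ x : K, (Equiv.Perm.sign (permS S hS) : ℤ) • x = sgn * x := by
    intro x
    rw [zsmul_eq_mul, hsgn]
  rw [hzs]
  have hsq : sgn * sgn = 1 := by
    rcases Int.units_eq_one_or (Equiv.Perm.sign (permS S hS)) with h | h <;> simp [hsgn, h]
  have hrel := sign_det_relation a S hS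
  rw [← hsgn] at hrel
  set VS := (Matrix.vandermonde (a ∘ uEmb S hS)).det
  set VW := (Matrix.vandermonde (a ∘ wEmb S hS)).det
  set cr := ∏ i : Fin d, ∏ k : Fin m, (a (wEmb S hS k) - a (uEmb S hS i)) with hcr
  have hcrne : cr ≠ 0 := cross_ne_zero a ha S hS
  rw [denom_eq a S hS, ← hcr]
  rw [prod_over_S ξ S hS, prod_over_Sc β S hS]
  have hpow : (-1 : K) ^ (d * m) * ((-1 : K) ^ (d * m)) = 1 := by
    rw [← pow_add]
    simp [pow_add, ← two_mul, pow_mul]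
  field_simp
  calc ((sgn * ∏ i : Fin d, ξ (uEmb S hS i)) * VS * ∏ k : Fin m, β (wEmb S hS k)) * VW * cr
      = ((∏ k : Fin m, β (wEmb S hS k)) * (∏ i : Fin d, ξ (uEmb S hS i))) *
          (sgn * (VS * VW * cr)) := by ring
    _ = ((∏ k : Fin m, β (wEmb S hS k)) * (∏ i : Fin d, ξ (uEmb S hS i))) *
          (sgn * (sgn * (Matrix.vandermonde a).det)) := by rw [← hrel]
    _ = ((∏ i : Fin d, ξ (uEmb S hS i)) * ∏ k : Fin m, β (wEmb S hS k)) *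
          (Matrix.vandermonde a).det := by
        rw [← mul_assoc sgn sgn, hsq]; ring
end Chunk4

section Chunk5
open SSV
set_option linter.unusedSectionVars false
set_option maxHeartbeats 1000000
variable {K : Type*} [Field K] [DecidableEq K] {d m : ℕ}

lemma image_uEmb (S : Finset (Fin (d + m))) (hS : S.card = d) :
    Finset.image (uEmb S hS) Finset.univ = S := by
  ext y
  simp only [Finset.mem_image, Finset.mem_univ, true_and]
  constructor
  · rintro ⟨i, rfl⟩; exact uEmb_mem S hS i
  · intro hy
    have : y ∈ Set.range (S.orderEmbOfFin hS) := by
      rw [Finset.range_orderEmbOfFin]; exact hy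
    obtain ⟨i, hi⟩ := this
    exact ⟨i, hi⟩

lemma image_permS (S : Finset (Fin (d + m))) (hS : S.card = d) :
    Finset.image (fun i : Fin d => finSumFinEquiv (permS S hS (Sum.inl i))) Finset.univ = S := by
  have : (fun i : Fin d => finSumFinEquiv (permS S hS (Sum.inl i))) = uEmb S hS := by
    funext i
    rw [permS_apply]
    simp
  rw [this]
  exact image_uEmb S hS

lemma key (a ξ β : Fin (d + m) → K) (ha : Function.Injective a)
    (hdep : ¬ LinearIndependent K (rowsV a ξ β)) :
    ∑ S ∈ (Finset.univ : Finset (Fin (d + m))).powersetCard d,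
      (∏ t ∈ Sᶜ, β t) * (∏ s ∈ S, ξ s) / (∏ s ∈ S, ∏ t ∈ Sᶜ, (a s - a t)) = 0 := by
  classical
  set Φ := ((TensorProduct.lid K K).toLinearMap).compAlternatingMap
    ((aMap d m K).domCoprod (bMap d m K)) with hΦ
  have h0 : Φ (rowsV a ξ β) = 0 := AlternatingMap.map_linearDependent _ _ hdep
  have h1 : Φ (rowsV a ξ β) = ∑ q : Equiv.Perm.ModSumCongr (Fin d) (Fin m),
      (TensorProduct.lid K K) (AlternatingMap.domCoprod.summand (aMap d m K) (bMap d m K) q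
        (rowsV a ξ β)) := by
    rw [hΦ, LinearMap.compAlternatingMap_apply]
    have : ((aMap d m K).domCoprod (bMap d m K)) (rowsV a ξ β) =
        (↑((aMap d m K).domCoprod (bMap d m K)) :
          MultilinearMap K (fun _ : Fin d ⊕ Fin m => (Fin d ⊕ Fin m) → K) _) (rowsV a ξ β) := rfl
    rw [this, AlternatingMap.domCoprod_coe, MultilinearMap.sum_apply, map_sum]
    rfl
  have h2 : (∑ S ∈ (Finset.univ : Finset (Fin (d + m))).powersetCard d,
        (-1 : K) ^ (d * m) * (Matrix.vandermonde a).det *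
          ((∏ t ∈ Sᶜ, β t) * (∏ s ∈ S, ξ s) / (∏ s ∈ S, ∏ t ∈ Sᶜ, (a s - a t))))
      = ∑ q : Equiv.Perm.ModSumCongr (Fin d) (Fin m),
        (TensorProduct.lid K K) (AlternatingMap.domCoprod.summand (aMap d m K) (bMap d m K) q
          (rowsV a ξ β)) := by
    refine Finset.sum_bij
      (fun S hS => Quotient.mk'' (permS S (Finset.mem_powersetCard.mp hS).2)) ?_ ?_ ?_ ?_
    · intro S hS
      exact Finset.mem_univ _
    · -- injectivity
      intro S₁ h₁ S₂ h₂ heq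
      set c₁ := (Finset.mem_powersetCard.mp h₁).2
      set c₂ := (Finset.mem_powersetCard.mp h₂).2
      rw [Quotient.eq''] at heq
      rw [QuotientGroup.leftRel_apply] at heq
      obtain ⟨⟨sl, sr⟩, hpair⟩ := heq
      have hmul : permS S₂ c₂ = permS S₁ c₁ * Equiv.Perm.sumCongrHom _ _ (sl, sr) := by
        rw [hpair]
        simp [mul_inv_cancel_left]
      have himg₂ : S₂ = Finset.image
          (fun i : Fin d => finSumFinEquiv (permS S₂ c₂ (Sum.inl i))) Finset.univ :=
        (image_permS S₂ c₂).symm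
      rw [himg₂]
      have hstep : ∀ i : Fin d, permS S₂ c₂ (Sum.inl i) = permS S₁ c₁ (Sum.inl (sl i)) := by
        intro i
        rw [hmul]
        simp [Equiv.Perm.sumCongrHom_apply, Equiv.Perm.mul_apply]
      have : (fun i : Fin d => finSumFinEquiv (permS S₂ c₂ (Sum.inl i)))
          = (fun i : Fin d => finSumFinEquiv (permS S₁ c₁ (Sum.inl i))) ∘ sl := by
        funext i
        simp [hstep i]
      rw [this, ← Finset.image_image]
      have himsl : Finset.image (⇑sl) Finset.univ = Finset.univ := by
        ext y
        simp only [Finset.mem_image, Finset.mem_univ, true_and, iff_true]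
        exact ⟨sl.symm y, sl.apply_symm_apply y⟩
      rw [himsl, image_permS S₁ c₁]
    · -- surjectivity
      intro q _
      obtain ⟨σ, rfl⟩ : ∃ σ, Quotient.mk'' σ = q := Quotient.exists_rep q
      set S := Finset.image (fun i : Fin d => finSumFinEquiv (σ (Sum.inl i))) Finset.univ with hSdef
      have hinj : Function.Injective (fun i : Fin d => finSumFinEquiv (σ (Sum.inl i))) := by
        intro i j h
        have := finSumFinEquiv.injective h
        have := σ.injective this
        exact Sum.inl_injective this
      have hcard : S.card = d := by
        rw [hSdef, Finset.card_image_of_injective _ hinj, Finset.card_univ, Fintype.card_fin]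
      have hmem : S ∈ (Finset.univ : Finset (Fin (d + m))).powersetCard d :=
        Finset.mem_powersetCard.mpr ⟨Finset.subset_univ _, hcard⟩
      refine ⟨S, hmem, ?_⟩
      rw [Quotient.eq'']
      rw [QuotientGroup.leftRel_apply]
      apply Equiv.Perm.mem_sumCongrHom_range_of_perm_mapsTo_inl
      rintro x ⟨i, rfl⟩
      have hmemS : finSumFinEquiv (σ (Sum.inl i)) ∈ S := by
        rw [hSdef]
        exact Finset.mem_image_of_mem _ (Finset.mem_univ i)
      have hc := (Finset.mem_powersetCard.mp hmem).2
      rw [← image_uEmb S hc] at hmemS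
      obtain ⟨i', _, hi'⟩ := Finset.mem_image.mp hmemS
      have hps : permS S hc (Sum.inl i') = σ (Sum.inl i) := by
        rw [permS_apply]
        simp only [Sum.elim_inl, hi']
        exact finSumFinEquiv.symm_apply_apply _
      refine ⟨i', ?_⟩
      show Sum.inl i' = ((permS S hc)⁻¹ * σ) (Sum.inl i)
      rw [Equiv.Perm.mul_apply, ← hps]
      exact ((permS S hc).symm_apply_apply _).symm
    · -- values
      intro S hS
      exact (term_value a ξ β ha S (Finset.mem_powersetCard.mp hS).2).symm
  rw [← h2] at h1
  rw [h1] at h0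
  rw [← Finset.mul_sum] at h0
  have hV : (Matrix.vandermonde a).det ≠ 0 := Matrix.det_vandermonde_ne_zero_iff.mpr ha
  have hc : ((-1 : K) ^ (d * m) * (Matrix.vandermonde a).det) ≠ 0 := by
    apply mul_ne_zero _ hV
    exact pow_ne_zero _ (by norm_num)
  exact (mul_eq_zero.mp h0).resolve_left hc
end Chunk5

section Chunk6
open SSV
set_option linter.unusedSectionVars false
set_option maxHeartbeats 1000000
variable {K : Type*} [Field K] [DecidableEq K] {d m : ℕ}

lemma rows_dep (hpos : 0 < d) (a ξ β : Fin (d + m) → K)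
    (P : Fin d ⊕ Fin m → Polynomial K)
    (hPdeg : ∀ c, (P c).natDegree < d + m - 1)
    (hP : ∀ (c c' : Fin d ⊕ Fin m), (P c').eval (a (finSumFinEquiv c)) = rowsV a ξ β c c') :
    ¬ LinearIndependent K (rowsV a ξ β) := by
  intro hli
  set n1 := d + m - 1 with hn1
  set Cm : Matrix (Fin n1) (Fin d ⊕ Fin m) K := fun k c' => (P c').coeff k with hCm
  have hnotinj : ¬ Function.Injective Cm.mulVecLin := by
    intro hinj
    have hle := LinearMap.finrank_le_finrank_of_injective hinj
    rw [Module.finrank_fintype_fun_eq_card, Module.finrank_fintype_fun_eq_card] at hle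
    simp only [Fintype.card_sum, Fintype.card_fin] at hle
    omega
  rw [← LinearMap.ker_eq_bot] at hnotinj
  obtain ⟨v, hvmem, hvne⟩ := (Submodule.ne_bot_iff _).mp hnotinj
  set W : Matrix (Fin d ⊕ Fin m) (Fin n1) K :=
    fun c k => a (finSumFinEquiv c) ^ (k : ℕ) with hW
  have hfact : Matrix.of (rowsV a ξ β) = W * Cm := by
    ext c c'
    rw [Matrix.mul_apply]
    rw [Matrix.of_apply, ← hP c c',
      Polynomial.eval_eq_sum_range' (hPdeg c') (a (finSumFinEquiv c)),
      ← Fin.sum_univ_eq_sum_range]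
    refine Finset.sum_congr rfl fun k _ => ?_
    rw [hW, hCm]
    ring
  have hMv : (Matrix.of (rowsV a ξ β)) *ᵥ v = 0 := by
    rw [hfact, ← Matrix.mulVec_mulVec]
    have : Cm *ᵥ v = 0 := by
      have := hvmem
      rw [LinearMap.mem_ker, Matrix.mulVecLin_apply] at this
      exact this
    rw [this, Matrix.mulVec_zero]
  have hdet : (Matrix.of (rowsV a ξ β)).det = 0 :=
    Matrix.exists_mulVec_eq_zero_iff.mp ⟨v, hvne, hMv⟩
  obtain ⟨rr, hrne, hr⟩ := Matrix.exists_vecMul_eq_zero_iff.mpr hdet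
  have hall := Fintype.linearIndependent_iff.mp hli rr ?_
  · exact hrne (funext fun c => hall c)
  · funext c'
    have := congrFun hr c'
    rw [Matrix.vecMul, dotProduct] at this
    simpa [Finset.sum_apply, smul_eq_mul] using this
end Chunk6

section Chunk7
open SSV Polynomial
set_option maxHeartbeats 1000000

/-- for |A| ≥ d, |B| < d and |X| ≤ |A|+|B|−2d,
Σ_{A₁⊔A₂=A,|A₁|=d} R(A₂,B)R(X,A₁)/R(A₁,A₂) = 0. -/
theorem single_sum_vanishes {K : Type*} [Field K] [DecidableEq K] (d r : ℕ) (A B : Finset K)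
    (hA : d ≤ A.card) (hB : B.card < d) (hr : r + 2 * d ≤ A.card + B.card) (x : Fin r → K) :
    ∑ A₁ ∈ A.powersetCard d,
        (∏ a ∈ A \ A₁, ∏ b ∈ B, (a - b)) * (∏ i, ∏ a ∈ A₁, (x i - a)) /
          (∏ a ∈ A₁, ∏ a' ∈ A \ A₁, (a - a'))
      = 0 := by
  classical
  have hd : 0 < d := Nat.pos_of_ne_zero (by rintro rfl; omega)
  set m := A.card - d with hmdef
  have hcard : A.card = d + m := by omega
  have hrm : r + 1 ≤ m := by omega
  have hAc : Fintype.card {y // y ∈ A} = d + m := by rw [Fintype.card_coe]; exact hcard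
  set e : Fin (d + m) ≃ {y // y ∈ A} := (Fintype.equivFinOfCardEq hAc).symm with he
  set a : Fin (d + m) → K := fun i => (e i : K) with hadef
  have ha : Function.Injective a := fun i j h => e.injective (Subtype.ext h)
  set emb : Fin (d + m) ↪ K := ⟨a, ha⟩ with hemb
  have hAmap : A = Finset.univ.map emb := by
    ext y
    simp only [Finset.mem_map, Finset.mem_univ, true_and]
    constructor
    · intro hy
      refine ⟨e.symm ⟨y, hy⟩, ?_⟩
      simp [hemb, hadef]
    · rintro ⟨i, rfl⟩
      exact (e i).2
  set ξ : Fin (d + m) → K := fun i => ∏ t, (x t - a i) with hξ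
  set β : Fin (d + m) → K := fun i => ∏ b ∈ B, (a i - b) with hβ
  -- the polynomials giving the columns
  set P : Fin d ⊕ Fin m → Polynomial K := Sum.elim
      (fun j : Fin d => (∏ t : Fin r, (Polynomial.C (x t) - Polynomial.X)) * Polynomial.X ^ (j : ℕ))
      (fun k : Fin m => (∏ b ∈ B, (Polynomial.X - Polynomial.C b)) * Polynomial.X ^ (k : ℕ))
    with hPdef
  have hdeg1 : (∏ t : Fin r, (Polynomial.C (x t) - Polynomial.X)).natDegree ≤ r := by
    refine le_trans (Polynomial.natDegree_prod_le _ _) ?_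
    calc ∑ t : Fin r, (Polynomial.C (x t) - Polynomial.X).natDegree
        ≤ ∑ _t : Fin r, 1 := by
          refine Finset.sum_le_sum fun t _ => ?_
          refine le_trans (Polynomial.natDegree_sub_le _ _) ?_
          simp
      _ = r := by simp
  have hdeg2 : (∏ b ∈ B, (Polynomial.X - Polynomial.C b)).natDegree ≤ B.card := by
    refine le_trans (Polynomial.natDegree_prod_le _ _) ?_
    calc ∑ b ∈ B, (Polynomial.X - Polynomial.C b).natDegree
        ≤ ∑ _b ∈ B, 1 := by
          refine Finset.sum_le_sum fun b _ => ?_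
          refine le_trans (Polynomial.natDegree_sub_le _ _) ?_
          simp
      _ = B.card := by simp
  have hPdeg : ∀ c, (P c).natDegree < d + m - 1 := by
    rintro (j | k)
    · have h1 : (P (Sum.inl j)).natDegree ≤ r + (j : ℕ) := by
        rw [hPdef]
        simp only [Sum.elim_inl]
        refine le_trans (Polynomial.natDegree_mul_le) ?_
        have := Polynomial.natDegree_X_pow (R := K) (j : ℕ)
        omega
      have hj : (j : ℕ) < d := j.isLt
      omega
    · have h1 : (P (Sum.inr k)).natDegree ≤ B.card + (k : ℕ) := by
        rw [hPdef]
        simp only [Sum.elim_inr]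
        refine le_trans (Polynomial.natDegree_mul_le) ?_
        have := Polynomial.natDegree_X_pow (R := K) (k : ℕ)
        omega
      have hk : (k : ℕ) < m := k.isLt
      omega
  have hPev : ∀ (c c' : Fin d ⊕ Fin m),
      (P c').eval (a (finSumFinEquiv c)) = rowsV a ξ β c c' := by
    rintro c (j | k) <;>
      simp [hPdef, rowsV, hξ, hβ, Polynomial.eval_prod]
  have hkey := key a ξ β ha (rows_dep hd a ξ β P hPdeg hPev)
  rw [hAmap, Finset.powersetCard_map, Finset.sum_map]
  refine Eq.trans (Finset.sum_congr rfl ?_) hkey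
  intro S hS
  have hME : ∀ T : Finset (Fin (d + m)), (Finset.mapEmbedding emb).toEmbedding T = T.map emb :=
    fun T => Finset.mapEmbedding_apply
  simp only [hME]
  have hsd : Finset.univ.map emb \ S.map emb = Sᶜ.map emb := by
    ext y
    simp only [Finset.mem_sdiff, Finset.mem_map, Finset.mem_univ, true_and, Finset.mem_compl]
    constructor
    · rintro ⟨⟨i, rfl⟩, hnot⟩
      exact ⟨i, fun hiS => hnot ⟨i, hiS, rfl⟩, rfl⟩
    · rintro ⟨i, hiS, rfl⟩
      refine ⟨⟨i, rfl⟩, ?_⟩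
      rintro ⟨j, hjS, hj⟩
      exact hiS (emb.injective hj ▸ hjS)
  rw [hsd]
  simp only [Finset.prod_map]
  have hemba : ∀ i, emb i = a i := fun i => rfl
  simp only [hemba]
  have h2 : (∏ i, ∏ s ∈ S, (x i - a s)) = ∏ s ∈ S, ξ s := by
    rw [Finset.prod_comm]
  rw [h2]
end Chunk7
end

section
/- Let A, B ⊆ K be finite sets of cardinalities m and n, and let p, q ≥ 0 with d := p+q satisfying d ≤ min{m,n} (and d < m if m = n). Then the double sum reduces to a single sum: Syl_{p,q}(A,B)(x) = (−1)^{q(m−d)} · C(d,p) · Syl_{d,0}(A,B)(x). -/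
open Finset Polynomial


lemma lagrange_vanish {F : Type*} [Field F] [DecidableEq F] (C : Finset F) (H : Polynomial F)
    (hH : H ≠ 0) (h : H.natDegree + 2 ≤ C.card) :
    ∑ c ∈ C, H.eval c / ∏ c' ∈ C.erase c, (c - c') = 0 := by
  have hinj : Set.InjOn id (C : Set F) := Function.injective_id.injOn
  have hdeg : H.degree < C.card := by
    rw [Polynomial.degree_eq_natDegree hH]
    exact_mod_cast lt_of_lt_of_le (by omega) h
  have hint : Lagrange.interpolate C id (fun i => H.eval (id i)) = H :=
    (Lagrange.eq_interpolate hinj hdeg).symm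
  have hco : H.coeff (C.card - 1) = 0 := by
    apply Polynomial.coeff_eq_zero_of_natDegree_lt
    omega
  rw [← hint] at hco
  rw [Lagrange.interpolate_apply] at hco
  simp only [id_eq] at hco
  rw [Polynomial.finset_sum_coeff] at hco
  have : ∀ c ∈ C, (Polynomial.C (H.eval c) * Lagrange.basis C id c).coeff (C.card - 1)
      = H.eval c / ∏ c' ∈ C.erase c, (c - c') := by
    intro c hc
    rw [Polynomial.coeff_C_mul]
    have hb : (Lagrange.basis C id c).coeff (C.card - 1)
        = (∏ c' ∈ C.erase c, (c - c'))⁻¹ := by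
      have hdb : (Lagrange.basis C id c).natDegree = C.card - 1 :=
        Lagrange.natDegree_basis hinj hc
      have hlc : (Lagrange.basis C id c).leadingCoeff
          = ∏ c' ∈ C.erase c, (c - c')⁻¹ := by
        rw [Lagrange.basis, Polynomial.leadingCoeff_prod]
        refine Finset.prod_congr rfl fun j hj => ?_
        have hne : (c : F) ≠ j := by
          rcases Finset.mem_erase.mp hj with ⟨h1, _⟩
          exact fun hcj => h1 (hcj ▸ rfl)
        rw [Lagrange.basisDivisor, Polynomial.leadingCoeff_mul, Polynomial.leadingCoeff_C,
          Polynomial.leadingCoeff_X_sub_C, mul_one]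
        simp
      rw [← hdb, Polynomial.coeff_natDegree, hlc, ← Finset.prod_inv_distrib]
    rw [hb, div_eq_mul_inv]
  rw [Finset.sum_congr rfl this] at hco
  exact hco

lemma sum_powersetCard_succ {α M : Type*} [DecidableEq α] [AddCommMonoid M]
    (s : Finset α) (k : ℕ) (f : Finset α → M) :
    ∑ u ∈ s.powersetCard (k+1), (k+1) • f u
      = ∑ w ∈ s.powersetCard k, ∑ b ∈ s \ w, f (insert b w) := by
  have step : ∀ u ∈ s.powersetCard (k+1), (k+1) • f u = ∑ b ∈ u, f u := by
    intro u hu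
    rw [Finset.sum_const, (Finset.mem_powersetCard.mp hu).2]
  rw [Finset.sum_congr rfl step, Finset.sum_sigma', Finset.sum_sigma']
  refine Finset.sum_bij' (fun z _ => (⟨z.1.erase z.2, z.2⟩ : Σ _ : Finset α, α))
    (fun z _ => (⟨insert z.2 z.1, z.2⟩ : Σ _ : Finset α, α)) ?_ ?_ ?_ ?_ ?_
  · rintro ⟨u, b⟩ hz
    simp only [Finset.mem_sigma, Finset.mem_powersetCard] at hz ⊢
    obtain ⟨⟨hus, hcard⟩, hb⟩ := hz
    refine ⟨⟨(Finset.erase_subset _ _).trans hus, ?_⟩, ?_⟩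
    · rw [Finset.card_erase_of_mem hb, hcard]; rfl
    · simp [Finset.mem_sdiff, hus hb]
  · rintro ⟨w, b⟩ hz
    simp only [Finset.mem_sigma, Finset.mem_powersetCard, Finset.mem_sdiff] at hz ⊢
    obtain ⟨⟨hws, hcard⟩, hbs, hbw⟩ := hz
    refine ⟨⟨?_, ?_⟩, Finset.mem_insert_self _ _⟩
    · exact Finset.insert_subset hbs hws
    · rw [Finset.card_insert_of_notMem hbw, hcard]
  · rintro ⟨u, b⟩ hz
    simp only [Finset.mem_sigma, Finset.mem_powersetCard] at hz
    simp [Finset.insert_erase hz.2]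
  · rintro ⟨w, b⟩ hz
    simp only [Finset.mem_sigma, Finset.mem_powersetCard, Finset.mem_sdiff] at hz
    simp [Finset.erase_insert hz.2.2]
  · rintro ⟨u, b⟩ hz
    simp only [Finset.mem_sigma, Finset.mem_powersetCard] at hz
    simp [Finset.insert_erase hz.2]

lemma prod_flip' {F : Type*} [CommRing F] {α : Type*} (s : Finset α) (f g : α → F) :
    ∏ i ∈ s, (f i - g i) = (-1 : F) ^ s.card * ∏ i ∈ s, (g i - f i) := by
  rw [← Finset.prod_const, ← Finset.prod_mul_distrib]
  exact Finset.prod_congr rfl fun i _ => by ring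

noncomputable def sylT {F : Type*} [Field F] {m n : ℕ} (u : Fin m → F) (v : Fin n → F) (x : F)
    (S : Finset (Fin m)) (T : Finset (Fin n)) : F :=
  ((∏ i ∈ S, ∏ j ∈ T, (u i - v j)) *
      (∏ i ∈ univ \ S, ∏ j ∈ univ \ T, (u i - v j)) /
      ((∏ i ∈ S, ∏ i' ∈ univ \ S, (u i - u i')) *
        (∏ j ∈ T, ∏ j' ∈ univ \ T, (v j - v j')))) *
    ((∏ i ∈ S, (x - u i)) * ∏ j ∈ T, (x - v j))

lemma exchange {F : Type*} [Field F] [DecidableEq F] {m n : ℕ} (u : Fin m → F) (v : Fin n → F)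
    (x : F) (hu : Function.Injective u) (hv : Function.Injective v)
    (huv : ∀ i j, u i ≠ v j) {p q : ℕ} (S : Finset (Fin m)) (T : Finset (Fin n))
    (hS : S.card = p) (hT : T.card = q) (hpq : 2 * (p + q + 1) + 1 ≤ m + n)
    (hm : p + q + 1 ≤ m) :
    ∑ j ∈ univ \ T, sylT u v x S (insert j T)
      = (-1 : F) ^ (m - (p + q + 1)) * ∑ i ∈ univ \ S, sylT u v x (insert i S) T := by
  have hpm : p ≤ m := by
    have := Finset.card_le_card (Finset.subset_univ S); simpa [hS] using this
  have hqn : q ≤ n := by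
    have := Finset.card_le_card (Finset.subset_univ T); simpa [hT] using this
  have hScard : ((univ : Finset (Fin m)) \ S).card = m - p := by
    rw [card_sdiff_of_subset (subset_univ S), card_univ, hS, Fintype.card_fin]
  have hTcard : ((univ : Finset (Fin n)) \ T).card = n - q := by
    rw [card_sdiff_of_subset (subset_univ T), card_univ, hT, Fintype.card_fin]
  set eu : Fin m ↪ F := ⟨u, hu⟩ with heu
  set ev : Fin n ↪ F := ⟨v, hv⟩ with hev
  set CC : Finset F := ((univ \ S).map eu) ∪ ((univ \ T).map ev) with hCC
  have hdisj : Disjoint ((univ \ S).map eu) ((univ \ T).map ev) := by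
    rw [Finset.disjoint_left]
    rintro a ha hb
    simp only [mem_map, heu, hev, Function.Embedding.coeFn_mk] at ha hb
    obtain ⟨i, _, rfl⟩ := ha
    obtain ⟨j, _, hj⟩ := hb
    exact huv i j hj.symm
  have hCcard : CC.card = (m - p) + (n - q) := by
    rw [hCC, card_union_of_disjoint hdisj, card_map, card_map, hScard, hTcard]
  set H : Polynomial F :=
    (∏ i ∈ S, (Polynomial.C (u i) - X)) *
      ((∏ j ∈ T, (Polynomial.C (v j) - X)) * (Polynomial.C x - X)) with hHdef
  have hCXne : ∀ a : F, Polynomial.C a - X ≠ 0 := by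
    intro a h
    have h2 := congrArg (fun P : Polynomial F => P.coeff 1) h
    simp [Polynomial.coeff_X_one] at h2
  have hHne : H ≠ 0 := by
    refine mul_ne_zero (Finset.prod_ne_zero_iff.mpr fun i _ => hCXne _)
      (mul_ne_zero (Finset.prod_ne_zero_iff.mpr fun j _ => hCXne _) (hCXne _))
  have hb1 : ∀ a : F, (Polynomial.C a - X).natDegree ≤ 1 := by
    intro a
    refine le_trans (Polynomial.natDegree_sub_le _ _) (by simp)
  have hHdeg : H.natDegree + 2 ≤ CC.card := by
    have d1 : (∏ i ∈ S, (Polynomial.C (u i) - X)).natDegree ≤ p := by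
      refine le_trans (Polynomial.natDegree_prod_le _ _) ?_
      have := Finset.sum_le_card_nsmul S (fun i => (Polynomial.C (u i) - X).natDegree) 1
        (fun i _ => hb1 (u i))
      simpa [hS] using this
    have d2 : ((∏ j ∈ T, (Polynomial.C (v j) - X)) * (Polynomial.C x - X)).natDegree
        ≤ q + 1 := by
      refine le_trans (Polynomial.natDegree_mul_le) (add_le_add ?_ (hb1 x))
      refine le_trans (Polynomial.natDegree_prod_le _ _) ?_
      have := Finset.sum_le_card_nsmul T (fun j => (Polynomial.C (v j) - X).natDegree) 1
        (fun j _ => hb1 (v j))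
      simpa [hT] using this
    have : H.natDegree ≤ p + (q + 1) := le_trans Polynomial.natDegree_mul_le (add_le_add d1 d2)
    rw [hCcard]
    omega
  have hvan := lagrange_vanish CC H hHne hHdeg
  rw [hCC, Finset.sum_union hdisj, Finset.sum_map, Finset.sum_map] at hvan
  simp only [heu, hev, Function.Embedding.coeFn_mk] at hvan
  rw [← hCC] at hvan
  -- abbreviations
  set D1 : F := ∏ i ∈ S, ∏ i' ∈ univ \ S, (u i - u i') with hD1
  set E2 : F := ∏ j ∈ T, ∏ j' ∈ univ \ T, (v j - v j') with hE2
  set P : F := ∏ i ∈ S, ∏ j ∈ T, (u i - v j) with hP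
  set R : F := ∏ i ∈ univ \ S, ∏ j ∈ univ \ T, (u i - v j) with hRdef
  set πS : F := ∏ i ∈ S, (x - u i) with hπS
  set πT : F := ∏ j ∈ T, (x - v j) with hπT
  set Φ : F := P * (πS * πT) / (D1 * E2) with hΦ
  have hD1ne : D1 ≠ 0 := by
    rw [hD1]
    refine Finset.prod_ne_zero_iff.mpr fun i hi => Finset.prod_ne_zero_iff.mpr fun i' hi' => ?_
    exact sub_ne_zero_of_ne (fun h => (Finset.mem_sdiff.mp hi').2 (hu h ▸ hi))
  have hE2ne : E2 ≠ 0 := by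
    rw [hE2]
    refine Finset.prod_ne_zero_iff.mpr fun j hj => Finset.prod_ne_zero_iff.mpr fun j' hj' => ?_
    exact sub_ne_zero_of_ne (fun h => (Finset.mem_sdiff.mp hj').2 (hv h ▸ hj))
  have hBterm : ∀ j₀ ∈ univ \ T, sylT u v x S (insert j₀ T)
      = Φ * ((-1 : F) ^ (m - p) * R) *
        (H.eval (v j₀) / ∏ c' ∈ CC.erase (v j₀), (v j₀ - c')) := by
    intro j₀ hj₀
    have hj₀T : j₀ ∉ T := (Finset.mem_sdiff.mp hj₀).2
    have hj₀T2 : j₀ ∉ (univ \ T).erase j₀ := Finset.notMem_erase _ _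
    have hins : (univ : Finset (Fin n)) \ insert j₀ T = (univ \ T).erase j₀ :=
      Finset.sdiff_insert _ _ _
    have s1 : ∏ i ∈ S, ∏ j ∈ insert j₀ T, (u i - v j)
        = (∏ i ∈ S, (u i - v j₀)) * P := by
      rw [hP, ← Finset.prod_mul_distrib]
      exact Finset.prod_congr rfl fun i _ => Finset.prod_insert hj₀T
    have s2 : ∏ j ∈ insert j₀ T, ∏ j' ∈ (univ \ T).erase j₀, (v j - v j')
        = (∏ j' ∈ (univ \ T).erase j₀, (v j₀ - v j')) *
          ∏ j ∈ T, ∏ j' ∈ (univ \ T).erase j₀, (v j - v j') :=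
      Finset.prod_insert hj₀T
    have s3 : E2 = (∏ j ∈ T, (v j - v j₀)) *
        ∏ j ∈ T, ∏ j' ∈ (univ \ T).erase j₀, (v j - v j') := by
      rw [hE2, ← Finset.prod_mul_distrib]
      exact Finset.prod_congr rfl fun j _ => (Finset.mul_prod_erase _ _ hj₀).symm
    have s4 : R = (∏ i ∈ univ \ S, (u i - v j₀)) *
        ∏ i ∈ univ \ S, ∏ j ∈ (univ \ T).erase j₀, (u i - v j) := by
      rw [hRdef, ← Finset.prod_mul_distrib]
      exact Finset.prod_congr rfl fun i _ => (Finset.mul_prod_erase _ _ hj₀).symm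
    have s5 : H.eval (v j₀) = (∏ i ∈ S, (u i - v j₀)) *
        ((∏ j ∈ T, (v j - v j₀)) * (x - v j₀)) := by
      simp [hHdef, Polynomial.eval_prod]
    have s6 : CC.erase (v j₀) = ((univ \ S).map eu) ∪ ((univ \ T).erase j₀).map ev := by
      rw [hCC, Finset.erase_union_distrib, Finset.map_erase]
      congr 1
      refine Finset.erase_eq_of_notMem (fun hmem => ?_)
      simp only [heu, Finset.mem_map, Function.Embedding.coeFn_mk] at hmem
      obtain ⟨i, _, hi⟩ := hmem
      exact huv i j₀ hi
    have s7 : ∏ c' ∈ CC.erase (v j₀), (v j₀ - c')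
        = (∏ i ∈ univ \ S, (v j₀ - u i)) *
          ∏ j' ∈ (univ \ T).erase j₀, (v j₀ - v j') := by
      rw [s6, Finset.prod_union (hdisj.mono_right (Finset.map_subset_map.mpr
        (Finset.erase_subset _ _))), Finset.prod_map, Finset.prod_map]
      simp [heu, hev]
    have s8 : ∏ i ∈ univ \ S, (v j₀ - u i)
        = (-1 : F) ^ (m - p) * ∏ i ∈ univ \ S, (u i - v j₀) := by
      rw [prod_flip', hScard]
    have s9 : ∏ j ∈ insert j₀ T, (x - v j) = (x - v j₀) * πT :=
      Finset.prod_insert hj₀T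
    -- nonzeros
    have n3 : (∏ j' ∈ (univ \ T).erase j₀, (v j₀ - v j')) ≠ 0 := by
      refine Finset.prod_ne_zero_iff.mpr fun j' hj' => sub_ne_zero_of_ne fun h => ?_
      exact (Finset.mem_erase.mp hj').1 (hv h).symm
    have n4 : (∏ j ∈ T, (v j - v j₀)) ≠ 0 := by
      refine Finset.prod_ne_zero_iff.mpr fun j hj => sub_ne_zero_of_ne fun h => ?_
      exact hj₀T ((hv h) ▸ hj)
    have n5 : (∏ i ∈ univ \ S, (u i - v j₀)) ≠ 0 :=
      Finset.prod_ne_zero_iff.mpr fun i _ => sub_ne_zero_of_ne (huv i j₀)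
    have n6 : (∏ j ∈ T, ∏ j' ∈ (univ \ T).erase j₀, (v j - v j')) ≠ 0 := by
      refine Finset.prod_ne_zero_iff.mpr fun j hj => Finset.prod_ne_zero_iff.mpr
        fun j' hj' => sub_ne_zero_of_ne fun h => ?_
      exact (Finset.mem_sdiff.mp (Finset.mem_of_mem_erase hj')).2 ((hv h) ▸ hj)
    have npow : ((-1 : F) ^ (m - p)) ≠ 0 := pow_ne_zero _ (neg_ne_zero.mpr one_ne_zero)
    unfold sylT
    rw [hins, s1, s2, s5, s7, s8, s9, hΦ, s3, s4]
    rw [← hD1]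
    field_simp
    ring
  have hAterm : ∀ i₀ ∈ univ \ S, sylT u v x (insert i₀ S) T
      = Φ * ((-1 : F) ^ q * R) *
        (H.eval (u i₀) / ∏ c' ∈ CC.erase (u i₀), (u i₀ - c')) := by
    intro i₀ hi₀
    have hi₀S : i₀ ∉ S := (Finset.mem_sdiff.mp hi₀).2
    have hins2 : (univ : Finset (Fin m)) \ insert i₀ S = (univ \ S).erase i₀ :=
      Finset.sdiff_insert _ _ _
    have t1 : ∏ i ∈ insert i₀ S, ∏ j ∈ T, (u i - v j)
        = (∏ j ∈ T, (u i₀ - v j)) * P :=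
      Finset.prod_insert hi₀S
    have t3 : ∏ i ∈ insert i₀ S, ∏ i' ∈ (univ \ S).erase i₀, (u i - u i')
        = (∏ i' ∈ (univ \ S).erase i₀, (u i₀ - u i')) *
          ∏ i ∈ S, ∏ i' ∈ (univ \ S).erase i₀, (u i - u i') :=
      Finset.prod_insert hi₀S
    have t4 : D1 = (∏ i ∈ S, (u i - u i₀)) *
        ∏ i ∈ S, ∏ i' ∈ (univ \ S).erase i₀, (u i - u i') := by
      rw [hD1, ← Finset.prod_mul_distrib]
      exact Finset.prod_congr rfl fun i _ => (Finset.mul_prod_erase _ _ hi₀).symm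
    have t5 : R = (∏ j ∈ univ \ T, (u i₀ - v j)) *
        ∏ i ∈ (univ \ S).erase i₀, ∏ j ∈ univ \ T, (u i - v j) := by
      rw [hRdef]
      exact (Finset.mul_prod_erase _ _ hi₀).symm
    have t7 : H.eval (u i₀) = (∏ i ∈ S, (u i - u i₀)) *
        ((∏ j ∈ T, (v j - u i₀)) * (x - u i₀)) := by
      simp [hHdef, Polynomial.eval_prod]
    have t6 : CC.erase (u i₀) = (((univ \ S).erase i₀).map eu) ∪ ((univ \ T).map ev) := by
      rw [hCC, Finset.erase_union_distrib, Finset.map_erase]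
      congr 1
      refine Finset.erase_eq_of_notMem (fun hmem => ?_)
      simp only [hev, Finset.mem_map, Function.Embedding.coeFn_mk] at hmem
      obtain ⟨j, _, hj⟩ := hmem
      exact huv i₀ j hj.symm
    have t8 : ∏ c' ∈ CC.erase (u i₀), (u i₀ - c')
        = (∏ i' ∈ (univ \ S).erase i₀, (u i₀ - u i')) *
          ∏ j ∈ univ \ T, (u i₀ - v j) := by
      rw [t6, Finset.prod_union (hdisj.mono_left (Finset.map_subset_map.mpr
        (Finset.erase_subset _ _))), Finset.prod_map, Finset.prod_map]
      simp [heu, hev]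
    have t9 : ∏ j ∈ T, (v j - u i₀) = (-1 : F) ^ q * ∏ j ∈ T, (u i₀ - v j) := by
      rw [prod_flip', hT]
    have t10 : ∏ i ∈ insert i₀ S, (x - u i) = (x - u i₀) * πS :=
      Finset.prod_insert hi₀S
    have nμ : (∏ i' ∈ (univ \ S).erase i₀, (u i₀ - u i')) ≠ 0 := by
      refine Finset.prod_ne_zero_iff.mpr fun i' hi' => sub_ne_zero_of_ne fun h => ?_
      exact (Finset.mem_erase.mp hi').1 (hu h).symm
    have nε : (∏ i ∈ S, (u i - u i₀)) ≠ 0 := by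
      refine Finset.prod_ne_zero_iff.mpr fun i hi => sub_ne_zero_of_ne fun h => ?_
      exact hi₀S ((hu h) ▸ hi)
    have nν : (∏ j ∈ univ \ T, (u i₀ - v j)) ≠ 0 :=
      Finset.prod_ne_zero_iff.mpr fun j _ => sub_ne_zero_of_ne (huv i₀ j)
    have nG : (∏ i ∈ S, ∏ i' ∈ (univ \ S).erase i₀, (u i - u i')) ≠ 0 := by
      refine Finset.prod_ne_zero_iff.mpr fun i hi => Finset.prod_ne_zero_iff.mpr
        fun i' hi' => sub_ne_zero_of_ne fun h => ?_
      exact (Finset.mem_sdiff.mp (Finset.mem_of_mem_erase hi')).2 ((hu h) ▸ hi)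
    have npow : ((-1 : F) ^ q) ≠ 0 := pow_ne_zero _ (neg_ne_zero.mpr one_ne_zero)
    unfold sylT
    rw [hins2, t1, t3, t7, t8, t9, t10, hΦ, t4, t5, ← hE2, ← hπT]
    field_simp
    ring_nf
    rw [show ((-1 : F)) ^ (q * 2) = 1 by rw [mul_comm, pow_mul, neg_one_sq, one_pow]]
    ring
  rw [Finset.sum_congr rfl hBterm, Finset.sum_congr rfl hAterm, ← Finset.mul_sum,
    ← Finset.mul_sum]
  have hsum := eq_neg_of_add_eq_zero_right hvan
  rw [hsum]
  have harith : m - p = (m - (p + q + 1)) + q + 1 := by omega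
  rw [harith, pow_add, pow_add]
  ring

lemma step_s9 {F : Type*} [Field F] [DecidableEq F] {m n : ℕ} (u : Fin m → F) (v : Fin n → F)
    (x : F) (hu : Function.Injective u) (hv : Function.Injective v)
    (huv : ∀ i j, u i ≠ v j) (p q : ℕ)
    (hpq : 2 * (p + q + 1) + 1 ≤ m + n) (hm : p + q + 1 ≤ m) :
    ((q + 1 : ℕ) : F) *
        ∑ S ∈ (univ : Finset (Fin m)).powersetCard p,
          ∑ T ∈ (univ : Finset (Fin n)).powersetCard (q+1), sylT u v x S T
      = (-1 : F) ^ (m - (p + q + 1)) * ((p + 1 : ℕ) : F) *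
        ∑ S ∈ (univ : Finset (Fin m)).powersetCard (p+1),
          ∑ T ∈ (univ : Finset (Fin n)).powersetCard q, sylT u v x S T := by
  have lhs1 : ((q + 1 : ℕ) : F) *
        ∑ S ∈ (univ : Finset (Fin m)).powersetCard p,
          ∑ T ∈ (univ : Finset (Fin n)).powersetCard (q+1), sylT u v x S T
      = ∑ S ∈ (univ : Finset (Fin m)).powersetCard p,
          ∑ W ∈ (univ : Finset (Fin n)).powersetCard q,
            ∑ j ∈ univ \ W, sylT u v x S (insert j W) := by
    rw [Finset.mul_sum]
    refine Finset.sum_congr rfl fun S _ => ?_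
    rw [Finset.mul_sum, ← sum_powersetCard_succ]
    exact Finset.sum_congr rfl fun T _ => by rw [nsmul_eq_mul, Nat.cast_add, Nat.cast_one]
  rw [lhs1]
  have lhs2 : ∀ S ∈ (univ : Finset (Fin m)).powersetCard p,
      ∀ W ∈ (univ : Finset (Fin n)).powersetCard q,
      ∑ j ∈ univ \ W, sylT u v x S (insert j W)
        = (-1 : F) ^ (m - (p + q + 1)) * ∑ i ∈ univ \ S, sylT u v x (insert i S) W := by
    intro S hS W hW
    exact exchange u v x hu hv huv S W (Finset.mem_powersetCard.mp hS).2
      (Finset.mem_powersetCard.mp hW).2 hpq hm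
  rw [Finset.sum_congr rfl (fun S hS => Finset.sum_congr rfl (fun W hW => lhs2 S hS W hW))]
  simp only [← Finset.mul_sum]
  rw [mul_assoc]
  congr 1
  rw [Finset.sum_comm]
  conv_rhs => rw [Finset.sum_comm]
  rw [Finset.mul_sum]
  refine Finset.sum_congr rfl fun W _ => ?_
  have : ((p + 1 : ℕ) : F) * ∑ S ∈ (univ : Finset (Fin m)).powersetCard (p+1), sylT u v x S W
      = ∑ S ∈ (univ : Finset (Fin m)).powersetCard (p+1), (p+1) • sylT u v x S W := by
    rw [Finset.mul_sum]
    exact Finset.sum_congr rfl fun S _ => by rw [nsmul_eq_mul, Nat.cast_add, Nat.cast_one]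
  rw [this, sum_powersetCard_succ]

lemma core {F : Type*} [Field F] [DecidableEq F] [CharZero F] {m n : ℕ}
    (u : Fin m → F) (v : Fin n → F) (x : F) (hu : Function.Injective u)
    (hv : Function.Injective v) (huv : ∀ i j, u i ≠ v j) (p q : ℕ)
    (hd : p + q ≤ min m n) (hmn : m = n → p + q < m) :
    ∑ S ∈ (univ : Finset (Fin m)).powersetCard p,
        ∑ T ∈ (univ : Finset (Fin n)).powersetCard q, sylT u v x S T
      = (-1 : F) ^ (q * (m - (p + q))) * ((p + q).choose p : F) *
        ∑ S ∈ (univ : Finset (Fin m)).powersetCard (p + q),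
          sylT u v x S (∅ : Finset (Fin n)) := by
  induction q generalizing p with
  | zero => simp
  | succ q ih =>
    have hm' : p + q + 1 ≤ m := by have := min_le_left m n; omega
    have hn' : p + q + 1 ≤ n := by have := min_le_right m n; omega
    have hpq' : 2 * (p + q + 1) + 1 ≤ m + n := by
      rcases eq_or_ne m n with h | h
      · have := hmn h; omega
      · omega
    have hstep := step_s9 u v x hu hv huv p q hpq' hm'
    have ih' := ih (p + 1) (by omega) (fun h => by have := hmn h; omega)
    have hq1 : ((q + 1 : ℕ) : F) ≠ 0 := Nat.cast_ne_zero.mpr (Nat.succ_ne_zero q)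
    apply mul_left_cancel₀ hq1
    rw [hstep, ih']
    have hE : p + 1 + q = p + q + 1 := by omega
    have hE2 : p + (q + 1) = p + q + 1 := by omega
    rw [hE, hE2]
    set SS0 := ∑ S ∈ (univ : Finset (Fin m)).powersetCard (p + q + 1),
      sylT u v x S (∅ : Finset (Fin n)) with hSS0
    have hnat : (p + q + 1).choose (p + 1) * (p + 1) = (p + q + 1).choose p * (q + 1) := by
      rw [Nat.choose_succ_right_eq]
      congr 1
      omega
    have hcast : ((p + q + 1).choose (p + 1) : F) * ((p + 1 : ℕ) : F)
        = ((p + q + 1).choose p : F) * ((q + 1 : ℕ) : F) := by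
      exact_mod_cast congrArg (Nat.cast : ℕ → F) hnat
    rw [Nat.succ_mul, pow_add]
    linear_combination (((-1 : F) ^ (m - (p + q + 1)) * (-1 : F) ^ (q * (m - (p + q + 1)))) * SS0) * hcast

section Cleared

variable {S : Type*} [CommRing S] {m n : ℕ}

def cofA {k : ℕ} (u : Fin k → S) (A' : Finset (Fin k)) : S :=
  ∏ z ∈ (univ ×ˢ univ).filter (fun z : Fin k × Fin k => z.1 ≠ z.2 ∧ ¬(z.1 ∈ A' ∧ z.2 ∉ A')),
    (u z.1 - u z.2)

def discr {k : ℕ} (u : Fin k → S) : S :=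
  ∏ z ∈ (univ ×ˢ univ).filter (fun z : Fin k × Fin k => z.1 ≠ z.2), (u z.1 - u z.2)

def clearedLHS (p q : ℕ) (u : Fin m → S) (v : Fin n → S) (x : S) : S :=
  ∑ A' ∈ (univ : Finset (Fin m)).powersetCard p,
    ∑ B' ∈ (univ : Finset (Fin n)).powersetCard q,
      ((∏ i ∈ A', ∏ j ∈ B', (u i - v j)) *
        (∏ i ∈ univ \ A', ∏ j ∈ univ \ B', (u i - v j)) * cofA u A' * cofA v B') *
        ((∏ i ∈ A', (x - u i)) * ∏ j ∈ B', (x - v j))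

def clearedRHS (p q : ℕ) (u : Fin m → S) (v : Fin n → S) (x : S) : S :=
  (-1 : S) ^ (q * (m - (p + q))) * ((p + q).choose p : S) *
    ∑ A₁ ∈ (univ : Finset (Fin m)).powersetCard (p + q),
      ((∏ i ∈ univ \ A₁, ∏ j ∈ (univ : Finset (Fin n)), (u i - v j)) * cofA u A₁ * discr v) *
        ∏ i ∈ A₁, (x - u i)

lemma cleared_natural_lhs {S' : Type*} [CommRing S'] (f : S →+* S') (p q : ℕ)
    (u : Fin m → S) (v : Fin n → S) (x : S) :
    f (clearedLHS p q u v x) = clearedLHS p q (f ∘ u) (f ∘ v) (f x) := by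
  simp only [clearedLHS, cofA, map_sum, map_mul, map_prod, map_sub, Function.comp_apply]

lemma cleared_natural_rhs {S' : Type*} [CommRing S'] (f : S →+* S') (p q : ℕ)
    (u : Fin m → S) (v : Fin n → S) (x : S) :
    f (clearedRHS p q u v x) = clearedRHS p q (f ∘ u) (f ∘ v) (f x) := by
  simp only [clearedRHS, cofA, _root_.discr, map_sum, map_mul, map_prod, map_sub, map_pow, map_neg,
    map_one, map_natCast, Function.comp_apply]

end Cleared

section Equiv

variable {F : Type*} [Field F] {m n : ℕ}

lemma gA_mul_cofA {k : ℕ} (u : Fin k → F) (A' : Finset (Fin k)) :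
    (∏ i ∈ A', ∏ i' ∈ univ \ A', (u i - u i')) * cofA u A' = discr u := by
  have hset : ((univ ×ˢ univ).filter
        (fun z : Fin k × Fin k => z.1 ≠ z.2 ∧ (z.1 ∈ A' ∧ z.2 ∉ A')))
      = A' ×ˢ (univ \ A') := by
    ext z
    simp only [Finset.mem_filter, Finset.mem_product, Finset.mem_univ, true_and,
      Finset.mem_sdiff, ne_eq]
    constructor
    · rintro ⟨-, h1, h2⟩; exact ⟨h1, h2⟩
    · rintro ⟨h1, h2⟩; exact ⟨fun he => h2 (he ▸ h1), h1, h2⟩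
  have hg : (∏ i ∈ A', ∏ i' ∈ univ \ A', (u i - u i'))
      = ∏ z ∈ ((univ ×ˢ univ).filter
          (fun z : Fin k × Fin k => z.1 ≠ z.2 ∧ (z.1 ∈ A' ∧ z.2 ∉ A'))),
        (u z.1 - u z.2) := by
    rw [hset, Finset.prod_product]
  rw [hg, cofA, _root_.discr]
  rw [show ((univ ×ˢ univ).filter
      (fun z : Fin k × Fin k => z.1 ≠ z.2 ∧ (z.1 ∈ A' ∧ z.2 ∉ A')))
    = ((univ ×ˢ univ).filter (fun z : Fin k × Fin k => z.1 ≠ z.2)).filter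
        (fun z => z.1 ∈ A' ∧ z.2 ∉ A') from by rw [Finset.filter_filter]]
  rw [show ((univ ×ˢ univ).filter
      (fun z : Fin k × Fin k => z.1 ≠ z.2 ∧ ¬(z.1 ∈ A' ∧ z.2 ∉ A')))
    = ((univ ×ˢ univ).filter (fun z : Fin k × Fin k => z.1 ≠ z.2)).filter
        (fun z => ¬(z.1 ∈ A' ∧ z.2 ∉ A')) from by rw [Finset.filter_filter]]
  exact Finset.prod_filter_mul_prod_filter_not _ _ _

lemma gA_ne_zero {k : ℕ} (u : Fin k → F) (hu : Function.Injective u) (A' : Finset (Fin k)) :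
    (∏ i ∈ A', ∏ i' ∈ univ \ A', (u i - u i')) ≠ 0 := by
  refine Finset.prod_ne_zero_iff.mpr fun i hi => Finset.prod_ne_zero_iff.mpr
    fun i' hi' => sub_ne_zero_of_ne fun h => ?_
  exact (Finset.mem_sdiff.mp hi').2 (hu h ▸ hi)

lemma discr_ne_zero {k : ℕ} (u : Fin k → F) (hu : Function.Injective u) : discr u ≠ 0 := by
  refine Finset.prod_ne_zero_iff.mpr fun z hz => sub_ne_zero_of_ne fun h => ?_
  exact (Finset.mem_filter.mp hz).2 (hu h)

lemma lhs_scaled (u : Fin m → F) (v : Fin n → F) (hu : Function.Injective u)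
    (hv : Function.Injective v) (x : F) (p q : ℕ) :
    (∑ S ∈ (univ : Finset (Fin m)).powersetCard p,
        ∑ T ∈ (univ : Finset (Fin n)).powersetCard q, sylT u v x S T) * (discr u * discr v)
      = clearedLHS p q u v x := by
  rw [clearedLHS, Finset.sum_mul]
  refine Finset.sum_congr rfl fun A' _ => ?_
  rw [Finset.sum_mul]
  refine Finset.sum_congr rfl fun B' _ => ?_
  rw [sylT, ← gA_mul_cofA u A', ← gA_mul_cofA v B']
  have h1 := gA_ne_zero u hu A'
  have h2 := gA_ne_zero v hv B'
  field_simp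

lemma rhs_scaled (u : Fin m → F) (v : Fin n → F) (hu : Function.Injective u)
    (hv : Function.Injective v) (x : F) (p q : ℕ) :
    ((-1 : F) ^ (q * (m - (p + q))) * ((p + q).choose p : F) *
        ∑ S ∈ (univ : Finset (Fin m)).powersetCard (p + q),
          sylT u v x S (∅ : Finset (Fin n))) * (discr u * discr v)
      = clearedRHS p q u v x := by
  have key : (∑ S ∈ (univ : Finset (Fin m)).powersetCard (p + q),
        sylT u v x S (∅ : Finset (Fin n))) * (discr u * discr v)
      = ∑ A₁ ∈ (univ : Finset (Fin m)).powersetCard (p + q),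
          ((∏ i ∈ univ \ A₁, ∏ j ∈ (univ : Finset (Fin n)), (u i - v j)) * cofA u A₁ *
            discr v) * ∏ i ∈ A₁, (x - u i) := by
    rw [Finset.sum_mul]
    refine Finset.sum_congr rfl fun A₁ _ => ?_
    rw [sylT, ← gA_mul_cofA u A₁]
    have h1 := gA_ne_zero u hu A₁
    have h2 := discr_ne_zero v hv
    simp only [Finset.prod_empty, Finset.sdiff_empty, mul_one, one_mul]
    field_simp
    rw [Finset.prod_const_one, one_mul]
  rw [clearedRHS, ← key]
  ring

end Equiv

lemma cleared_identity {S : Type*} [CommRing S] (m n p q : ℕ)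
    (hd : p + q ≤ min m n) (hmn : m = n → p + q < m)
    (u : Fin m → S) (v : Fin n → S) (x : S) :
    clearedLHS p q u v x = clearedRHS p q u v x := by
  classical
  set σ := (Fin m ⊕ Fin n) ⊕ Unit
  let R₀ := MvPolynomial σ ℤ
  let L₀ := FractionRing R₀
  let ι : R₀ →+* L₀ := algebraMap R₀ L₀
  have hι : Function.Injective ι := IsFractionRing.injective R₀ L₀
  haveI : CharZero R₀ :=
    charZero_of_injective_algebraMap (R := ℤ) (MvPolynomial.C_injective σ ℤ)
  haveI : CharZero L₀ := charZero_of_injective_algebraMap hι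
  let U₀ : Fin m → R₀ := fun i => MvPolynomial.X (Sum.inl (Sum.inl i))
  let V₀ : Fin n → R₀ := fun j => MvPolynomial.X (Sum.inl (Sum.inr j))
  let X₀ : R₀ := MvPolynomial.X (Sum.inr ())
  have hXinj : Function.Injective (MvPolynomial.X : σ → R₀) := MvPolynomial.X_injective
  have hU : Function.Injective (ι ∘ U₀) := fun i i' h =>
    Sum.inl_injective (Sum.inl_injective (hXinj (hι h)))
  have hV : Function.Injective (ι ∘ V₀) := fun j j' h =>
    Sum.inr_injective (Sum.inl_injective (hXinj (hι h)))
  have hUV : ∀ i j, (ι ∘ U₀) i ≠ (ι ∘ V₀) j := fun i j h => by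
    have h2 := Sum.inl_injective (hXinj (hι h))
    exact Sum.inl_ne_inr h2
  have hgen : clearedLHS p q (ι ∘ U₀) (ι ∘ V₀) (ι X₀) = clearedRHS p q (ι ∘ U₀) (ι ∘ V₀) (ι X₀) := by
    rw [← lhs_scaled _ _ hU hV, ← rhs_scaled _ _ hU hV,
      core (ι ∘ U₀) (ι ∘ V₀) (ι X₀) hU hV hUV p q hd hmn]
  rw [← cleared_natural_lhs ι, ← cleared_natural_rhs ι] at hgen
  have hR₀ : clearedLHS p q U₀ V₀ X₀ = clearedRHS p q U₀ V₀ X₀ := hι hgen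
  let g : σ → S := Sum.elim (Sum.elim u v) (fun _ => x)
  let φ : R₀ →+* S := MvPolynomial.eval₂Hom (Int.castRingHom S) g
  have happ := congrArg φ hR₀
  rw [cleared_natural_lhs φ, cleared_natural_rhs φ] at happ
  have hu' : φ ∘ U₀ = u := by
    funext i
    show MvPolynomial.eval₂Hom (Int.castRingHom S) g (MvPolynomial.X (Sum.inl (Sum.inl i))) = u i
    rw [MvPolynomial.eval₂Hom_X']
    rfl
  have hv' : φ ∘ V₀ = v := by
    funext j
    show MvPolynomial.eval₂Hom (Int.castRingHom S) g (MvPolynomial.X (Sum.inl (Sum.inr j))) = v j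
    rw [MvPolynomial.eval₂Hom_X']
    rfl
  have hx' : φ X₀ = x := by
    show MvPolynomial.eval₂Hom (Int.castRingHom S) g (MvPolynomial.X (Sum.inr ())) = x
    rw [MvPolynomial.eval₂Hom_X']
    rfl
  rwa [hu', hv', hx'] at happ

/-- scalar identity over any field -/
lemma scalar_identity {F : Type*} [Field F] {m n : ℕ} (p q : ℕ)
    (hd : p + q ≤ min m n) (hmn : m = n → p + q < m)
    (u : Fin m → F) (v : Fin n → F) (hu : Function.Injective u) (hv : Function.Injective v)
    (x : F) :
    ∑ S ∈ (univ : Finset (Fin m)).powersetCard p,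
        ∑ T ∈ (univ : Finset (Fin n)).powersetCard q, sylT u v x S T
      = (-1 : F) ^ (q * (m - (p + q))) * ((p + q).choose p : F) *
        ∑ S ∈ (univ : Finset (Fin m)).powersetCard (p + q),
          sylT u v x S (∅ : Finset (Fin n)) := by
  have h := cleared_identity m n p q hd hmn u v x
  rw [← lhs_scaled u v hu hv x p q, ← rhs_scaled u v hu hv x p q] at h
  exact mul_right_cancel₀ (mul_ne_zero (discr_ne_zero u hu) (discr_ne_zero v hv)) h

lemma map_sdiff'' {α β : Type*} [DecidableEq α] [DecidableEq β] (f : α ↪ β) (s t : Finset α) :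
    (s \ t).map f = s.map f \ t.map f := by
  ext b
  simp only [Finset.mem_map, Finset.mem_sdiff]
  constructor
  · rintro ⟨a, ⟨h1, h2⟩, rfl⟩
    exact ⟨⟨a, h1, rfl⟩, fun ⟨a', h', he⟩ => h2 (f.injective he ▸ h')⟩
  · rintro ⟨⟨a, h1, rfl⟩, h2⟩
    exact ⟨a, ⟨h1, fun ht => h2 ⟨a, ht, rfl⟩⟩, rfl⟩

lemma finset_eq_map {K : Type*} [DecidableEq K] (s : Finset K) (m : ℕ) (h : s.card = m) :
    ∃ e : Fin m ↪ K, s = univ.map e := by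
  subst h
  refine ⟨⟨fun i => (s.equivFin.symm i : K), fun i i' hii => ?_⟩, ?_⟩
  · have := Subtype.coe_injective hii
    exact s.equivFin.symm.injective this
  · ext a
    simp only [Finset.mem_map, Finset.mem_univ, true_and, Function.Embedding.coeFn_mk]
    constructor
    · intro ha
      exact ⟨s.equivFin ⟨a, ha⟩, congrArg Subtype.val (s.equivFin.symm_apply_apply ⟨a, ha⟩)⟩
    · rintro ⟨i, rfl⟩
      exact (s.equivFin.symm i).2

/-- the Sylvester double sum reduces to the single sum:
Syl_{p,q}(A,B)(x) = (−1)^{q(m−d)} C(d,p) Syl_{d,0}(A,B)(x), where d = p+q. -/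
theorem double_sum_eq_single_sum {K : Type*} [Field K] [DecidableEq K] (m n p q : ℕ)
    (A B : Finset K) (hA : A.card = m) (hB : B.card = n)
    (hd : p + q ≤ min m n) (hmn : m = n → p + q < m) :
    ∑ A' ∈ A.powersetCard p, ∑ B' ∈ B.powersetCard q,
        Polynomial.C
            ((∏ a ∈ A', ∏ b ∈ B', (a - b)) *
              (∏ a ∈ A \ A', ∏ b ∈ B \ B', (a - b)) /
              ((∏ a ∈ A', ∏ a' ∈ A \ A', (a - a')) *
                (∏ b ∈ B', ∏ b' ∈ B \ B', (b - b')))) *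
          ((∏ a ∈ A', (Polynomial.X - Polynomial.C a)) *
            (∏ b ∈ B', (Polynomial.X - Polynomial.C b)))
      = Polynomial.C ((-1 : K) ^ (q * (m - (p + q))) * ((p + q).choose p : K)) *
          ∑ A₁ ∈ A.powersetCard (p + q),
            Polynomial.C
                ((∏ a ∈ A \ A₁, ∏ b ∈ B, (a - b)) /
                  (∏ a ∈ A₁, ∏ a' ∈ A \ A₁, (a - a'))) *
              ∏ a ∈ A₁, (Polynomial.X - Polynomial.C a) := by
  obtain ⟨eu, hAeq⟩ := finset_eq_map A m hA
  obtain ⟨ev, hBeq⟩ := finset_eq_map B n hB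
  subst hAeq hBeq
  simp only [Finset.powersetCard_map, Finset.sum_map, RelEmbedding.coe_toEmbedding,
    Finset.mapEmbedding_apply, ← map_sdiff'', Finset.prod_map]
  -- now a Fin-indexed polynomial identity
  set u : Fin m → K := ⇑eu with hu'
  set v : Fin n → K := ⇑ev with hv'
  -- move to RatFunc K
  apply RatFunc.algebraMap_injective K
  simp only [map_sum, map_mul, RatFunc.algebraMap_C, RatFunc.algebraMap_X, map_prod, map_sub,
    map_div₀, map_pow, map_neg, map_one, map_natCast]
  have hCinj : Function.Injective (RatFunc.C : K →+* RatFunc K) := (RatFunc.C (K := K)).injective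
  have h := scalar_identity (F := RatFunc K) p q hd hmn
    (fun i => RatFunc.C (u i)) (fun j => RatFunc.C (v j))
    (fun i i' hii => eu.injective (hCinj hii)) (fun j j' hjj => ev.injective (hCinj hjj))
    RatFunc.X
  unfold sylT at h
  simp only [Finset.prod_empty, Finset.prod_const_one, Finset.sdiff_empty, mul_one, one_mul] at h
  rw [h]
end

section
/- Let f = (x−α₁)(x−α₂)² and g = (x−β₁)³ in K[x] with α₁ ≠ α₂. Then Sres₂(f,g)(x) = g(x) − f(x), and this equals (α₂−β₁)(x−α₁)(x−α₂) − (α₁−β₁)²(x−α₂)(x−β₁)/(α₂−α₁) − (α₂−β₁)²(x−α₁)(x−β₁)/(α₁−α₂). -/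
/-- The order-`d` subresultant of `f` and `g` (of degrees `m` and `n`): determinant of the
standard `(m+n−2d)×(m+n−2d)` Sylvester-type matrix. -/
noncomputable def Sres {K : Type*} [Field K] (m n d : ℕ) (f g : Polynomial K) : Polynomial K :=
  Matrix.det (Matrix.of fun i j : Fin (m + n - 2 * d) =>
    if (j : ℕ) = m + n - 2 * d - 1 then
      (if (i : ℕ) < n - d then Polynomial.X ^ (n - d - 1 - (i : ℕ)) * f
       else Polynomial.X ^ (m - d - 1 - ((i : ℕ) - (n - d))) * g)
    else
      if (i : ℕ) < n - d then
        (if (j : ℕ) ≤ m + (i : ℕ) then Polynomial.C (f.coeff (m + (i : ℕ) - (j : ℕ))) else 0)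
      else
        (if (j : ℕ) ≤ n + ((i : ℕ) - (n - d)) then
          Polynomial.C (g.coeff (n + ((i : ℕ) - (n - d)) - (j : ℕ))) else 0))


/-- Example, second part: for f = (x−α₁)(x−α₂)², g = (x−β₁)³ with α₁ ≠ α₂,
Sres₂(f,g) = g − f, and this equals
(α₂−β₁)(x−α₁)(x−α₂) − (α₁−β₁)²(x−α₂)(x−β₁)/(α₂−α₁) − (α₂−β₁)²(x−α₁)(x−β₁)/(α₁−α₂). -/
theorem example_small_case' {K : Type*} [Field K] (α₁ α₂ β₁ : K) (hα : α₁ ≠ α₂)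
    (f g : Polynomial K)
    (hf : f = (Polynomial.X - Polynomial.C α₁) * (Polynomial.X - Polynomial.C α₂) ^ 2)
    (hg : g = (Polynomial.X - Polynomial.C β₁) ^ 3) :
    Sres 3 3 2 f g = g - f ∧
      g - f =
        Polynomial.C (α₂ - β₁) *
            ((Polynomial.X - Polynomial.C α₁) * (Polynomial.X - Polynomial.C α₂)) -
          Polynomial.C ((α₁ - β₁) ^ 2 / (α₂ - α₁)) *
            ((Polynomial.X - Polynomial.C α₂) * (Polynomial.X - Polynomial.C β₁)) -
          Polynomial.C ((α₂ - β₁) ^ 2 / (α₁ - α₂)) *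
            ((Polynomial.X - Polynomial.C α₁) * (Polynomial.X - Polynomial.C β₁)) := by
  open Polynomial in
  constructor
  · -- first part: the 2×2 determinant is C (f.coeff 3) * g − C (g.coeff 3) * f = g − f
    have hf3 : f.coeff 3 = 1 := by
      have h : f.Monic := hf ▸ ((monic_X_sub_C α₁).mul ((monic_X_sub_C α₂).pow 2))
      have hd : f.natDegree = 3 := by rw [hf]; compute_degree!
      simpa [hd] using h.coeff_natDegree
    have hg3 : g.coeff 3 = 1 := by
      have h : g.Monic := hg ▸ ((monic_X_sub_C β₁).pow 3)
      have hd : g.natDegree = 3 := by rw [hg]; compute_degree!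
      simpa [hd] using h.coeff_natDegree
    rw [Sres]
    rw [show (3 + 3 - 2 * 2) = 2 from rfl, Matrix.det_fin_two]
    simp [hf3, hg3]
  · -- second part: the partial-fraction style identity
    subst hf hg
    have h21 : α₂ - α₁ ≠ 0 := sub_ne_zero.mpr (Ne.symm hα)
    have h12 : α₁ - α₂ ≠ 0 := sub_ne_zero.mpr hα
    set c1 := (α₁ - β₁) ^ 2 / (α₂ - α₁) with hc1
    set c2 := (α₂ - β₁) ^ 2 / (α₁ - α₂) with hc2
    have h1 : C c1 * (C α₂ - C α₁) = (C α₁ - C β₁) ^ 2 := by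
      rw [← C_sub, ← C_mul, hc1, div_mul_cancel₀ _ h21, C_pow, C_sub]
    have h2 : C c2 * (C α₁ - C α₂) = (C α₂ - C β₁) ^ 2 := by
      rw [← C_sub, ← C_mul, hc2, div_mul_cancel₀ _ h12, C_pow, C_sub]
    have hC : (C (α₂ - α₁) : Polynomial K) ≠ 0 := Polynomial.C_ne_zero.mpr h21
    apply mul_left_cancel₀ hC
    simp only [C_sub]
    linear_combination (((X : Polynomial K) - C α₂) * (X - C β₁)) * h1 -
      ((X - C α₁) * (X - C β₁)) * h2
end

section
/- Let X be a multiset of r elements of K (with multiplicity structure j₁,…,j_r̄, where j₁+⋯+j_r̄ = r and the distinct elements are pairwise different), let k ≥ r, and let R ⊆ {1,…,k} have cardinality k − r. Then the confluent Schur function S_k^{(R)}(X) := det(V_k^{(R)}(X)) / det(V(X)) is a polynomial expression in the elements of X with coefficients in K; equivalently, det(V(X)) divides det(V_k^{(R)}(X)) in the polynomial ring over the distinct elements viewed as indeterminates. -/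
open Polynomial in
private theorem csp_dvd_deriv {A : Type*} [CommRing A] (a : A) :
    ∀ (t : ℕ) (s : ℕ) (h : A[X]), (X - C a) ^ s ∣ h →
      (X - C a) ^ (s - t) ∣ derivative^[t] h := by
  intro t
  induction t with
  | zero => intro s h hd; simpa using hd
  | succ t ih =>
    intro s h hd
    obtain ⟨u, hu⟩ := ih s h hd
    rw [Function.iterate_succ_apply', hu, derivative_mul, derivative_pow]
    refine dvd_add ?_ ?_
    · exact (((pow_dvd_pow (X - C a)
        (show s - (t + 1) ≤ s - t - 1 by omega)).mul_left _).mul_right _).mul_right _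
    · exact (pow_dvd_pow (X - C a) (show s - (t + 1) ≤ s - t by omega)).mul_right _

open Polynomial in
private theorem csp_eval_zero {A : Type*} [CommRing A] (a : A) (t s : ℕ) (h : A[X])
    (hts : t < s) (hd : (X - C a) ^ s ∣ h) : (derivative^[t] h).eval a = 0 := by
  have := csp_dvd_deriv a t s h hd
  have h1 : (X - C a) ∣ derivative^[t] h :=
    (dvd_pow_self (X - C a) (n := s - t) (by omega)).trans this
  obtain ⟨u, hu⟩ := h1
  simp [hu]

open Polynomial in
private theorem csp_aux {A : Type*} [CommRing A] (r : ℕ) (a : Fin r → A) (l : Fin r → ℕ)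
    (m : Fin r → ℕ) (P : A[X]) (hP : P.Monic) (hdeg : P.natDegree = r)
    (hdvd : ∀ q, (X - C (a q)) ^ (l q + 1) ∣ P) :
    Matrix.det (Matrix.of fun p q : Fin r =>
      (Nat.descFactorial (r - 1 - (p : ℕ)) (l q) : A) * a q ^ (r - 1 - (p : ℕ) - l q))
    ∣ Matrix.det (Matrix.of fun p q : Fin r =>
      (Nat.descFactorial (m p) (l q) : A) * a q ^ (m p - l q)) := by
  rcases Nat.eq_zero_or_pos r with hr | hr
  · subst hr; simp [Matrix.det_isEmpty]
  have hP1 : P ≠ 1 := fun h => by simp [h] at hdeg; omega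
  have hpow : ∀ n : ℕ, (fun f : A[X] => derivative^[n] f)
      = ⇑((derivative : A[X] →ₗ[A] A[X]) ^ n) := by
    intro n; ext x; rw [Module.End.pow_apply]
  have hrow : ∀ (n : ℕ) (q : Fin r), (derivative^[l q] ((X : A[X]) ^ n)).eval (a q)
      = (Nat.descFactorial n (l q) : A) * a q ^ (n - l q) := by
    intro n q
    rw [iterate_derivative_X_pow_eq_C_mul]
    simp
  have hvan : ∀ (q : Fin r) (g : A[X]), (derivative^[l q] (P * g)).eval (a q) = 0 := by
    intro q g
    exact csp_eval_zero (a q) (l q) (l q + 1) (P * g) (by omega) ((hdvd q).mul_right g)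
  have hEval : ∀ (q : Fin r) (f : A[X]), f.natDegree < r →
      (derivative^[l q] f).eval (a q)
        = ∑ d : Fin r, f.coeff d *
            ((Nat.descFactorial (d : ℕ) (l q) : A) * a q ^ ((d : ℕ) - l q)) := by
    intro q f hf
    conv_lhs => rw [f.as_sum_range' r hf]
    rw [show (derivative^[l q] : A[X] → A[X]) = ⇑((derivative : A[X] →ₗ[A] A[X]) ^ (l q))
      from hpow (l q)]
    rw [map_sum, eval_finset_sum, Finset.sum_range]
    refine Finset.sum_congr rfl fun d _ => ?_
    have hC : ((derivative : A[X] →ₗ[A] A[X]) ^ (l q)) (C (f.coeff d) * X ^ (d : ℕ))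
        = C (f.coeff d) * ((derivative : A[X] →ₗ[A] A[X]) ^ (l q)) (X ^ (d : ℕ)) := by
      rw [← smul_eq_C_mul, ← smul_eq_C_mul, map_smul]
    rw [← C_mul_X_pow_eq_monomial, hC, eval_mul, eval_C, Module.End.pow_apply, hrow]
  set M : Matrix (Fin r) (Fin r) A :=
    Matrix.of fun p d => ((X : A[X]) ^ (m p) %ₘ P).coeff (r - 1 - (d : ℕ)) with hM
  have key : (Matrix.of fun p q : Fin r =>
      (Nat.descFactorial (m p) (l q) : A) * a q ^ (m p - l q))
      = M * (Matrix.of fun p q : Fin r =>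
      (Nat.descFactorial (r - 1 - (p : ℕ)) (l q) : A) * a q ^ (r - 1 - (p : ℕ) - l q)) := by
    ext p q
    rw [Matrix.mul_apply]
    have hrem : ((X : A[X]) ^ (m p) %ₘ P).natDegree < r :=
      hdeg ▸ natDegree_modByMonic_lt _ hP hP1
    have hsplit : (X : A[X]) ^ (m p)
        = P * ((X : A[X]) ^ (m p) /ₘ P) + (X : A[X]) ^ (m p) %ₘ P := by
      rw [add_comm]; exact (modByMonic_add_div _ P).symm
    have hentry : (Matrix.of fun p q : Fin r =>
        (Nat.descFactorial (m p) (l q) : A) * a q ^ (m p - l q)) p q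
        = (derivative^[l q] ((X : A[X]) ^ (m p) %ₘ P)).eval (a q) := by
      show (Nat.descFactorial (m p) (l q) : A) * a q ^ (m p - l q) = _
      rw [← hrow (m p) q]
      conv_lhs => rw [hsplit]
      rw [show (derivative^[l q] : A[X] → A[X]) = ⇑((derivative : A[X] →ₗ[A] A[X]) ^ (l q))
        from hpow (l q)]
      rw [map_add, eval_add, Module.End.pow_apply, Module.End.pow_apply, hvan q, zero_add]
    rw [hentry, hEval q _ hrem]
    refine Fintype.sum_equiv Fin.revPerm _ _ fun d => ?_
    have hd := d.isLt
    have h1 : r - 1 - (r - ((d : ℕ) + 1)) = (d : ℕ) := by omega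
    simp only [Fin.revPerm_apply, Matrix.of_apply, hM, Fin.val_rev, h1, mul_assoc]
  rw [key, Matrix.det_mul, mul_comm]
  exact Dvd.intro _ rfl

open MvPolynomial in
/-- the confluent Schur function is a polynomial; equivalently, the
determinant of the square confluent Vandermonde matrix V(X) divides the determinant of
the submatrix V_k^{(R)}(X) of the k×r confluent Vandermonde matrix obtained by deleting
the rows indexed by R, in the polynomial ring over the distinct elements of X viewed as
indeterminates.  Here X has s̄ distinct elements with multiplicities j₁,…,j_{s̄} summing
to r; row p of a k-row confluent Vandermonde matrix carries the (l-th derivative of the)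
power t^{k−1−p}, and columns are indexed (via any enumeration e) by pairs (i,l) with
l < jᵢ. -/
theorem confluent_schur_is_polynomial {K : Type*} [Field K] (sbar k : ℕ)
    (j : Fin sbar → ℕ) (hk : (∑ i, j i) ≤ k)
    (R : Finset (Fin k)) (hR : R.card = k - ∑ i, j i)
    (hRc : (Rᶜ : Finset (Fin k)).card = ∑ i, j i)
    (e : ((i : Fin sbar) × Fin (j i)) ≃ Fin (∑ i, j i)) :
    Matrix.det (Matrix.of fun p q : Fin (∑ i, j i) =>
        ((Nat.descFactorial ((∑ i, j i) - 1 - (p : ℕ)) ((e.symm q).2 : ℕ) :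
            MvPolynomial (Fin sbar) K)) *
          (X (e.symm q).1 : MvPolynomial (Fin sbar) K) ^
            ((∑ i, j i) - 1 - (p : ℕ) - ((e.symm q).2 : ℕ)))
      ∣ Matrix.det (Matrix.of fun p q : Fin (∑ i, j i) =>
        ((Nat.descFactorial (k - 1 - ((Rᶜ.orderIsoOfFin hRc p : Fin k) : ℕ))
            ((e.symm q).2 : ℕ) : MvPolynomial (Fin sbar) K)) *
          (X (e.symm q).1 : MvPolynomial (Fin sbar) K) ^
            (k - 1 - ((Rᶜ.orderIsoOfFin hRc p : Fin k) : ℕ) - ((e.symm q).2 : ℕ))) := by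
  set A := MvPolynomial (Fin sbar) K
  set P : Polynomial A := ∏ i : Fin sbar,
    (Polynomial.X - Polynomial.C (X i)) ^ (j i) with hPdef
  have hmon : ∀ i ∈ Finset.univ (α := Fin sbar),
      ((Polynomial.X - Polynomial.C (X i : A)) ^ (j i)).Monic :=
    fun i _ => (Polynomial.monic_X_sub_C _).pow _
  have hP : P.Monic := Polynomial.monic_prod_of_monic _ _ hmon
  have hdeg : P.natDegree = ∑ i, j i := by
    rw [hPdef, Polynomial.natDegree_prod_of_monic _ _ hmon]
    refine Finset.sum_congr rfl fun i _ => ?_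
    rw [Polynomial.natDegree_pow, Polynomial.natDegree_X_sub_C, mul_one]
  exact csp_aux (∑ i, j i) (fun q => X (e.symm q).1) (fun q => ((e.symm q).2 : ℕ))
    (fun p => k - 1 - ((Rᶜ.orderIsoOfFin hRc p : Fin k) : ℕ)) P hP hdeg
    (fun q => dvd_trans (pow_dvd_pow _ (e.symm q).2.isLt)
      (Finset.dvd_prod_of_mem _ (Finset.mem_univ (e.symm q).1)))
end

section
/- Let A ⊆ K be a finite set with |A| = m, let B ⊆ K be finite, let A₁ ⊆ A with |A₁| = d, and let Z be a set of variables with |Z| ≤ |B| − d. Then Σ_{B₁⊔B₂=B, |B₁|=d, |B₂|=|B|−d} R(A₁,B₂)·R(Z,B₁)/R(B₁,B₂) = R(Z,A₁). -/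
open Finset Polynomial

private lemma sum_one_degree {K : Type*} [Field K] (t : Finset K) :
    (∏ b ∈ t, (X - C b) : K[X]).degree = (t.card : WithBot ℕ) := by
  rw [Polynomial.degree_prod]
  simp [Polynomial.degree_X_sub_C]

private lemma gen_interp {K : Type*} [Field K] [DecidableEq K] (d : ℕ) :
    ∀ (r : ℕ) (B : Finset K) (a : Fin d → K) (z : Fin r → K), r + d ≤ B.card →
    (∑ B₁ ∈ B.powersetCard d,
        (∏ j, ∏ b ∈ B \ B₁, (a j - b)) * (∏ i, ∏ b ∈ B₁, (z i - b)) /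
          (∏ b ∈ B₁, ∏ b' ∈ B \ B₁, (b - b')))
      = ∏ i, ∏ j, (z i - a j) := by
  induction d with
  | zero => intro r B a z _; simp
  | succ d ih =>
    intro r B a z hcard
    have hd1 : d + 1 ≤ B.card := le_trans (Nat.le_add_left _ _) hcard
    have hn0 : 0 < B.card := lt_of_lt_of_le (Nat.succ_pos d) hd1
    set c : Finset K → K := fun B₁ =>
      (∏ j : Fin d, ∏ b ∈ B \ B₁, (a j.castSucc - b)) * (∏ i, ∏ b ∈ B₁, (z i - b)) /
        (∏ b ∈ B₁, ∏ b' ∈ B \ B₁, (b - b')) with hc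
    set P : Polynomial K := ∑ B₁ ∈ B.powersetCard (d+1),
      C (c B₁) * ∏ b ∈ B \ B₁, (X - C b) with hP
    set w : K := ∏ i, ∏ j : Fin d, (z i - a j.castSucc) with hw
    set Q : Polynomial K := C w * ∏ i, (C (z i) - X) with hQ
    have hPeval : ∀ t : K, P.eval t
        = ∑ B₁ ∈ B.powersetCard (d+1), c B₁ * ∏ b ∈ B \ B₁, (t - b) := by
      intro t
      rw [hP, Polynomial.eval_finset_sum]
      exact Finset.sum_congr rfl fun B₁ _ => by simp [Polynomial.eval_prod]
    have hQeval : ∀ t : K, Q.eval t = w * ∏ i, (z i - t) := by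
      intro t; simp [hQ, Polynomial.eval_prod]
    have hPQ : P = Q := by
      apply Polynomial.eq_of_degrees_lt_of_eval_finset_eq B
      · -- degree P < card B
        refine lt_of_le_of_lt (Polynomial.degree_sum_le _ _) ?_
        rw [Finset.sup_lt_iff (by exact_mod_cast WithBot.bot_lt_coe B.card)]
        intro B₁ hB₁
        obtain ⟨hB₁B, hB₁c⟩ := Finset.mem_powersetCard.mp hB₁
        refine lt_of_le_of_lt (Polynomial.degree_mul_le _ _) ?_
        refine lt_of_le_of_lt (add_le_add Polynomial.degree_C_le (le_of_eq (sum_one_degree _))) ?_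
        rw [zero_add, Finset.card_sdiff_of_subset hB₁B, hB₁c]
        exact_mod_cast Nat.sub_lt hn0 (Nat.succ_pos d)
      · -- degree Q < card B
        refine lt_of_le_of_lt (Polynomial.degree_mul_le _ _) ?_
        refine lt_of_le_of_lt (add_le_add Polynomial.degree_C_le
          (Polynomial.degree_prod_le _ _)) ?_
        rw [zero_add]
        have h1 : ∀ i : Fin r, (C (z i) - X : K[X]).degree ≤ 1 := by
          intro i
          rw [show (C (z i) - X : K[X]) = -(X - C (z i)) by ring, Polynomial.degree_neg,
            Polynomial.degree_X_sub_C]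
        refine lt_of_le_of_lt (Finset.sum_le_sum fun i _ => h1 i) ?_
        rw [Finset.sum_const, Finset.card_univ, Fintype.card_fin, nsmul_eq_mul, mul_one]
        exact_mod_cast lt_of_lt_of_le (Nat.lt_succ_of_le (Nat.le_add_right r d))
          (by omega : r + d + 1 ≤ B.card)
      · -- evaluation agreement on B
        intro b hb
        rw [hPeval, hQeval]
        set B' := B.erase b with hB'
        have hbB' : b ∉ B' := Finset.notMem_erase b B
        have hins : B = insert b B' := (Finset.insert_erase hb).symm
        rw [hins, Finset.powersetCard_succ_insert hbB', Finset.sum_union, ← hins]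
        · have hzero : ∑ B₁ ∈ B'.powersetCard (d+1), c B₁ * ∏ b' ∈ B \ B₁, (b - b') = 0 := by
            refine Finset.sum_eq_zero fun B₁ hB₁ => ?_
            obtain ⟨hB₁B, _⟩ := Finset.mem_powersetCard.mp hB₁
            have hbmem : b ∈ B \ B₁ := Finset.mem_sdiff.mpr
              ⟨hb, fun h => hbB' (hB₁B h)⟩
            rw [Finset.prod_eq_zero hbmem (by ring), mul_zero]
          rw [hzero, zero_add]
          rw [Finset.sum_image (fun s hs t ht hst => by
            have hbs : b ∉ s := fun h => hbB' ((Finset.mem_powersetCard.mp hs).1 h)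
            have hbt : b ∉ t := fun h => hbB' ((Finset.mem_powersetCard.mp ht).1 h)
            rw [← Finset.erase_insert hbs, ← Finset.erase_insert hbt, hst])]
          have hterm : ∀ s ∈ B'.powersetCard d,
              c (insert b s) * ∏ b' ∈ B \ insert b s, (b - b')
                = (∏ i, (z i - b)) *
                  ((∏ j : Fin d, ∏ b' ∈ B' \ s, (a j.castSucc - b')) *
                    (∏ i, ∏ b' ∈ s, (z i - b')) /
                   (∏ b' ∈ s, ∏ b'' ∈ B' \ s, (b' - b''))) := by
            intro s hs
            obtain ⟨hsB', hsc⟩ := Finset.mem_powersetCard.mp hs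
            have hbs : b ∉ s := fun h => hbB' (hsB' h)
            have hset : B \ insert b s = B' \ s := by
              ext x
              simp only [Finset.mem_sdiff, Finset.mem_insert, hB', Finset.mem_erase]
              tauto
            have hPb : (∏ b' ∈ B' \ s, (b - b')) ≠ 0 := by
              refine Finset.prod_ne_zero_iff.mpr fun b' hb' => sub_ne_zero.mpr fun h => ?_
              exact (Finset.mem_erase.mp (Finset.mem_sdiff.mp hb').1).1 h.symm
            have hD : (∏ b' ∈ s, ∏ b'' ∈ B' \ s, (b' - b'')) ≠ 0 := by
              refine Finset.prod_ne_zero_iff.mpr fun b' hb' => ?_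
              refine Finset.prod_ne_zero_iff.mpr fun b'' hb'' => sub_ne_zero.mpr fun h => ?_
              exact (Finset.mem_sdiff.mp hb'').2 (h ▸ hb')
            rw [hc]
            simp only [hset, Finset.prod_insert hbs, Finset.prod_mul_distrib]
            field_simp
          rw [Finset.sum_congr rfl hterm, ← Finset.mul_sum]
          have hcard' : r + d ≤ B'.card := by
            rw [hB', Finset.card_erase_of_mem hb]; omega
          rw [ih r B' (fun j => a j.castSucc) z hcard', ← hw]
          ring
        · rw [Finset.disjoint_left]
          intro s hs hs'
          obtain ⟨hsub, _⟩ := Finset.mem_powersetCard.mp hs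
          obtain ⟨t, ht, rfl⟩ := Finset.mem_image.mp hs'
          exact hbB' (hsub (Finset.mem_insert_self b t))
    -- conclude by evaluating at a (Fin.last d)
    have hL : (∑ B₁ ∈ B.powersetCard (d+1),
        (∏ j, ∏ b ∈ B \ B₁, (a j - b)) * (∏ i, ∏ b ∈ B₁, (z i - b)) /
          (∏ b ∈ B₁, ∏ b' ∈ B \ B₁, (b - b')))
        = P.eval (a (Fin.last d)) := by
      rw [hPeval]
      refine Finset.sum_congr rfl fun B₁ _ => ?_
      rw [hc]
      simp only [Fin.prod_univ_castSucc]
      ring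
    rw [hL, hPQ, hQeval]
    rw [hw, ← Finset.prod_mul_distrib]
    exact Finset.prod_congr rfl fun i _ => by rw [Fin.prod_univ_castSucc]

/-- identity (3.1): for A₁ ⊆ A with |A₁| = d and |Z| ≤ |B| − d,
Σ_{B₁⊔B₂=B,|B₁|=d} R(A₁,B₂)·R(Z,B₁)/R(B₁,B₂) = R(Z,A₁). -/
theorem single_sum_interpolation_identity {K : Type*} [Field K] [DecidableEq K]
    (m d r : ℕ) (A B A₁ : Finset K) (hA : A.card = m)
    (hA₁ : A₁ ⊆ A) (hA₁c : A₁.card = d) (hr : r + d ≤ B.card) (z : Fin r → K) :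
    ∑ B₁ ∈ B.powersetCard d,
        (∏ a ∈ A₁, ∏ b ∈ B \ B₁, (a - b)) * (∏ i, ∏ b ∈ B₁, (z i - b)) /
          (∏ b ∈ B₁, ∏ b' ∈ B \ B₁, (b - b'))
      = ∏ i, ∏ a ∈ A₁, (z i - a) := by
  have e := A₁.equivFinOfCardEq hA₁c
  have key := gen_interp d r B (fun j => ((e.symm j : A₁) : K)) z hr
  have hprod : ∀ f : K → K, (∏ j : Fin d, f ((e.symm j : A₁) : K)) = ∏ a ∈ A₁, f a := by
    intro f
    rw [Equiv.prod_comp e.symm (fun x : A₁ => f (x : K))]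
    exact Finset.prod_coe_sort A₁ f
  calc ∑ B₁ ∈ B.powersetCard d,
        (∏ a ∈ A₁, ∏ b ∈ B \ B₁, (a - b)) * (∏ i, ∏ b ∈ B₁, (z i - b)) /
          (∏ b ∈ B₁, ∏ b' ∈ B \ B₁, (b - b'))
      = ∑ B₁ ∈ B.powersetCard d,
        (∏ j : Fin d, ∏ b ∈ B \ B₁, (((e.symm j : A₁) : K) - b)) *
          (∏ i, ∏ b ∈ B₁, (z i - b)) /
          (∏ b ∈ B₁, ∏ b' ∈ B \ B₁, (b - b')) := by
        refine Finset.sum_congr rfl fun B₁ _ => ?_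
        rw [hprod (fun a => ∏ b ∈ B \ B₁, (a - b))]
    _ = ∏ i, ∏ j : Fin d, (z i - ((e.symm j : A₁) : K)) := key
    _ = ∏ i, ∏ a ∈ A₁, (z i - a) :=
        Finset.prod_congr rfl fun i _ => hprod (fun a => z i - a)
end
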